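/- arXiv:2512.24689 — 3 statements merged into one kernel-verified Lean document; each statement's English description precedes it below -/
import Mathlib

section
/- For every prime power q and every integer h ≥ 2, there exist two disjoint blocking sets of PG(2, q^h), each of size q^h + q^{h-1} + 1; hence there exists a 2-fold blocking set of PG(2, q^h) of size 2(q^h + q^{h-1} + 1). -/
/-- The relative trace `x ↦ x + x^q + ⋯ + x^{q^{h-1}}`. -/
def Tr (q h : ℕ) {K : Type*} [Field K] (x : K) : K :=
  ∑ i ∈ Finset.range h, x ^ q ^ i

/-- The line of `PG(2, K)` with equation `a 0 * X + a 1 * Y + a 2 * Z = 0`. -/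
def projLine {K : Type*} [Field K] (a : Fin 3 → K) :
    Set (Projectivization K (Fin 3 → K)) :=
  {P | ∑ i, a i * P.rep i = 0}

/-- A subset of `PG(2, K)` is a line if it is `projLine a` for some nonzero `a`. -/
def IsLine {K : Type*} [Field K] (ℓ : Set (Projectivization K (Fin 3 → K))) : Prop :=
  ∃ a : Fin 3 → K, a ≠ 0 ∧ ℓ = projLine a

/-- The trace-construction point set
`{(x : Tr(x) : y) : x ∈ F_{q^h}, y ∈ F_q, (x,y) ≠ (0,0)}` in `PG(2, q^h)`. -/
def traceSet (q h : ℕ) (F K : Type*) [Field F] [Field K] [Algebra F K] :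
    Set (Projectivization K (Fin 3 → K)) :=
  {P | ∃ (x : K) (y : F), (x ≠ 0 ∨ y ≠ 0) ∧
    ∃ hv : (![x, Tr q h x, algebraMap F K y] : Fin 3 → K) ≠ 0,
      P = Projectivization.mk K (![x, Tr q h x, algebraMap F K y]) hv}


set_option linter.unusedSectionVars false

namespace Stmt13

section Helpers

variable {K : Type*} [Field K]

lemma vec_ne_zero {a b c : K} (hne : a ≠ 0 ∨ b ≠ 0 ∨ c ≠ 0) :
    (![a, b, c] : Fin 3 → K) ≠ 0 := by
  intro h0
  rcases hne with ha | hb | hc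
  · exact ha (by simpa using congrFun h0 0)
  · exact hb (by simpa using congrFun h0 1)
  · exact hc (by simpa using congrFun h0 2)

lemma mk_eq_mk_vec {v w : Fin 3 → K} (hv : v ≠ 0) (hw : w ≠ 0) :
    Projectivization.mk K v hv = Projectivization.mk K w hw ↔
      ∃ u : K, u ≠ 0 ∧ u * w 0 = v 0 ∧ u * w 1 = v 1 ∧ u * w 2 = v 2 := by
  rw [Projectivization.mk_eq_mk_iff']
  constructor
  · rintro ⟨u, hu⟩
    have hune : u ≠ 0 := by
      rintro rfl
      rw [zero_smul] at hu
      exact hv hu.symm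
    refine ⟨u, hune, ?_, ?_, ?_⟩ <;>
      (rw [← hu]; simp [Pi.smul_apply, smul_eq_mul])
  · rintro ⟨u, hune, h0, h1, h2⟩
    refine ⟨u, ?_⟩
    funext i
    fin_cases i <;> simp [Pi.smul_apply, smul_eq_mul, h0, h1, h2]

lemma mem_projLine_mk (a : Fin 3 → K) (v : Fin 3 → K) (hv : v ≠ 0) :
    Projectivization.mk K v hv ∈ projLine a ↔ a 0 * v 0 + a 1 * v 1 + a 2 * v 2 = 0 := by
  obtain ⟨u, hu⟩ := Projectivization.exists_smul_eq_mk_rep K v hv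
  have hrep : ∀ i, (Projectivization.mk K v hv).rep i = (u : K) * v i := by
    intro i
    rw [← hu]
    simp [Pi.smul_apply, Units.smul_def, smul_eq_mul]
  unfold projLine
  simp only [Set.mem_setOf_eq, Fin.sum_univ_three, hrep]
  constructor
  · intro hsum
    have : (u : K) * (a 0 * v 0 + a 1 * v 1 + a 2 * v 2) = 0 := by
      rw [← hsum]; ring
    rcases mul_eq_zero.mp this with hu0 | hgood
    · exact absurd hu0 u.ne_zero
    · exact hgood
  · intro hsum
    have : a 0 * ((u:K) * v 0) + a 1 * ((u:K) * v 1) + a 2 * ((u:K) * v 2)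
        = (u : K) * (a 0 * v 0 + a 1 * v 1 + a 2 * v 2) := by ring
    rw [this, hsum, mul_zero]

def mkA (q h : ℕ) {K : Type*} [Field K] (x : K) : Projectivization K (Fin 3 → K) :=
  Projectivization.mk K ![x, Tr q h x, 1] (vec_ne_zero (Or.inr (Or.inr one_ne_zero)))

def mkI (q h : ℕ) {K : Type*} [Field K] (z : K) : Projectivization K (Fin 3 → K) :=
  Projectivization.mk K ![z, 1, 0] (vec_ne_zero (Or.inr (Or.inl one_ne_zero)))

def mkP0 (q h : ℕ) {K : Type*} [Field K] : Projectivization K (Fin 3 → K) :=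
  Projectivization.mk K ![1, 0, 0] (vec_ne_zero (Or.inl one_ne_zero))

lemma vec_comp {a b c : K} : (![a,b,c] : Fin 3 → K) 0 = a ∧ (![a,b,c] : Fin 3 → K) 1 = b
    ∧ (![a,b,c] : Fin 3 → K) 2 = c := by
  refine ⟨rfl, rfl, rfl⟩

end Helpers

open Finset

variable {F K : Type*} [Field F] [Field K] [Algebra F K] [Fintype F] [Fintype K]
variable {q h : ℕ}

lemma exists_charP (hq : IsPrimePow q) (hcard : Fintype.card F = q) :
    ∃ p k : ℕ, p.Prime ∧ 0 < k ∧ q = p ^ k ∧ CharP K p := by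
  obtain ⟨p, k, hp, hk, hpk⟩ := hq
  have hp' : p.Prime := Nat.prime_iff.mpr hp
  obtain ⟨n, hrp, hcards⟩ := FiniteField.card F (ringChar F)
  have hq' : q = ringChar F ^ (n : ℕ) := by rw [← hcard, hcards]
  have hpr : p = ringChar F := by
    have hdvd : p ∣ ringChar F ^ (n : ℕ) := by
      rw [← hq', ← hpk]
      exact dvd_pow_self p hk.ne'
    exact ((Nat.prime_dvd_prime_iff_eq hp' hrp).mp (hp'.dvd_of_dvd_pow hdvd))
  haveI : CharP F p := by rw [hpr]; exact ringChar.charP F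
  haveI : CharP K p := charP_of_injective_ringHom (algebraMap F K).injective p
  exact ⟨p, k, hp', hk, hpk.symm, inferInstance⟩

lemma frob_add (hq : IsPrimePow q) (hcard : Fintype.card F = q) (n : ℕ) (x y : K) :
    (x + y) ^ q ^ n = x ^ q ^ n + y ^ q ^ n := by
  obtain ⟨p, k, hp, hk, rfl, hchar⟩ := exists_charP (F := F) (K := K) hq hcard
  haveI := hchar
  haveI := Fact.mk hp
  rw [← pow_mul, add_pow_char_pow, pow_mul]

lemma tr_add (hq : IsPrimePow q) (hcard : Fintype.card F = q) (x y : K) :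
    Tr q h (x + y) = Tr q h x + Tr q h y := by
  unfold Tr
  rw [← Finset.sum_add_distrib]
  exact Finset.sum_congr rfl fun i _ => frob_add (F := F) hq hcard i x y

lemma tr_zero (hq : IsPrimePow q) : Tr q h (0 : K) = 0 := by
  unfold Tr
  refine Finset.sum_eq_zero fun i _ => ?_
  exact zero_pow (pow_ne_zero i (by have := hq.two_le; omega))

lemma amap_pow (hcard : Fintype.card F = q) (c : F) (n : ℕ) :
    (algebraMap F K c) ^ q ^ n = algebraMap F K c := by
  rw [← map_pow]
  congr 1
  have := FiniteField.pow_card_pow n c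
  rwa [hcard] at this

lemma tr_smul (hcard : Fintype.card F = q) (c : F) (x : K) :
    Tr q h (algebraMap F K c * x) = algebraMap F K c * Tr q h x := by
  unfold Tr
  rw [Finset.mul_sum]
  refine Finset.sum_congr rfl fun i _ => ?_
  rw [mul_pow, amap_pow hcard]

lemma tr_neg (hq : IsPrimePow q) (hcard : Fintype.card F = q) (x : K) :
    Tr q h (-x) = - Tr q h x := by
  have := tr_add (F := F) (h := h) hq hcard x (-x)
  rw [add_neg_cancel, tr_zero hq] at this
  linear_combination -this

lemma tr_sub (hq : IsPrimePow q) (hcard : Fintype.card F = q) (x y : K) :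
    Tr q h (x - y) = Tr q h x - Tr q h y := by
  rw [sub_eq_add_neg, tr_add (F := F) hq hcard, tr_neg (F := F) hq hcard, sub_eq_add_neg]


lemma card_K (hcard : Fintype.card F = q) (hrank : Module.finrank F K = h) :
    Fintype.card K = q ^ h := by
  rw [Module.card_eq_pow_finrank (K := F) (V := K), hcard, hrank]

lemma pow_qh (hcard : Fintype.card F = q) (hrank : Module.finrank F K = h) (x : K) :
    x ^ q ^ h = x := by
  have := FiniteField.pow_card x
  rwa [card_K hcard hrank] at this

lemma tr_pow_q (hq : IsPrimePow q) (hcard : Fintype.card F = q)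
    (hrank : Module.finrank F K = h) (x : K) :
    (Tr q h x) ^ q = Tr q h x := by
  classical
  have hsum : ∀ s : Finset ℕ, (∑ i ∈ s, x ^ q ^ i) ^ q = ∑ i ∈ s, (x ^ q ^ i) ^ q := by
    intro s
    induction s using Finset.induction_on with
    | empty => simp [zero_pow (by have := hq.two_le; omega : q ≠ 0)]
    | @insert a s hnotmem ih =>
        rw [Finset.sum_insert hnotmem, Finset.sum_insert hnotmem, ← ih]
        have := frob_add (F := F) (q := q) hq hcard 1 (x ^ q ^ a) (∑ i ∈ s, x ^ q ^ i)
        rw [pow_one] at this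
        exact this
  unfold Tr
  rw [hsum]
  have hterm : ∀ i : ℕ, (x ^ q ^ i) ^ q = x ^ q ^ (i + 1) := by
    intro i
    rw [← pow_mul, ← pow_succ]
  rw [Finset.sum_congr rfl fun i _ => hterm i]
  have h1 := Finset.sum_range_succ' (fun i => x ^ q ^ i) h
  have h2 := Finset.sum_range_succ (fun i => x ^ q ^ i) h
  have hx0 : x ^ q ^ 0 = x := by rw [pow_zero, pow_one]
  have hxh : x ^ q ^ h = x := pow_qh hcard hrank x
  rw [h2] at h1
  rw [hx0, hxh] at h1
  exact add_right_cancel h1.symm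

lemma fixed_mem (hq : IsPrimePow q) (hcard : Fintype.card F = q) (z : K)
    (hz : z ^ q = z) : ∃ c : F, algebraMap F K c = z := by
  classical
  have hq2 : 2 ≤ q := hq.two_le
  set P : Polynomial K := Polynomial.X ^ q - Polynomial.X with hP
  have hPne : P ≠ 0 := by
    intro h0
    have hc : P.coeff q = 1 := by
      rw [hP]
      rw [Polynomial.coeff_sub, Polynomial.coeff_X_pow, Polynomial.coeff_X]
      have h1 : ¬ (1 : ℕ) = q := by omega
      have h2 : ¬ q = 1 := by omega
      simp [h1, h2]
    rw [h0] at hc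
    simp at hc
  have hdeg : P.natDegree ≤ q := by
    refine le_trans (Polynomial.natDegree_sub_le _ _) ?_
    simp [Polynomial.natDegree_X_pow]
    omega
  have hTcard : P.roots.toFinset.card ≤ q :=
    le_trans (Multiset.toFinset_card_le _) (le_trans (Polynomial.card_roots' P) hdeg)
  have hsub : (Finset.univ.image (algebraMap F K)) ⊆ P.roots.toFinset := by
    intro t ht
    obtain ⟨c, _, rfl⟩ := Finset.mem_image.mp ht
    rw [Multiset.mem_toFinset, Polynomial.mem_roots hPne]
    have := amap_pow (K := K) hcard c 1
    rw [pow_one] at this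
    simp [hP, Polynomial.IsRoot, this]
  have hcardim : (Finset.univ.image (algebraMap F K)).card = q := by
    rw [Finset.card_image_of_injective _ (algebraMap F K).injective, Finset.card_univ, hcard]
  have heq : Finset.univ.image (algebraMap F K) = P.roots.toFinset :=
    Finset.eq_of_subset_of_card_le hsub (by omega)
  have hzmem : z ∈ P.roots.toFinset := by
    rw [Multiset.mem_toFinset, Polynomial.mem_roots hPne]
    simp [hP, Polynomial.IsRoot, hz]
  rw [← heq] at hzmem
  obtain ⟨c, _, hc⟩ := Finset.mem_image.mp hzmem
  exact ⟨c, hc⟩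

lemma tr_mem (hq : IsPrimePow q) (hcard : Fintype.card F = q)
    (hrank : Module.finrank F K = h) (x : K) :
    ∃ c : F, algebraMap F K c = Tr q h x :=
  fixed_mem hq hcard _ (tr_pow_q hq hcard hrank x)

lemma tr_exists_ne_zero (hq : IsPrimePow q) (hcard : Fintype.card F = q)
    (hh : 1 ≤ h) (hrank : Module.finrank F K = h) :
    ∃ x : K, Tr q h x ≠ 0 := by
  classical
  by_contra hno
  push_neg at hno
  have hq2 : 2 ≤ q := hq.two_le
  set G : Polynomial K := ∑ i ∈ Finset.range h, Polynomial.X ^ q ^ i with hG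
  have hGne : G ≠ 0 := by
    intro h0
    have hc : G.coeff (q ^ (h - 1)) = 1 := by
      rw [hG, Polynomial.finset_sum_coeff]
      have : ∀ i ∈ Finset.range h,
          (Polynomial.X ^ q ^ i : Polynomial K).coeff (q ^ (h - 1))
            = if i = h - 1 then 1 else 0 := by
        intro i hi
        rw [Polynomial.coeff_X_pow]
        by_cases hie : i = h - 1
        · simp [hie]
        · have hne : ¬ q ^ i = q ^ (h - 1) := by
            intro hpow
            exact hie (Nat.pow_right_injective hq2 hpow)
          have hne' : ¬ q ^ (h - 1) = q ^ i := fun hx => hne hx.symm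
          simp [hie, hne, hne']
      rw [Finset.sum_congr rfl this, Finset.sum_ite_eq' (Finset.range h) (h-1)]
      simp [Finset.mem_range]
      omega
    rw [h0] at hc
    simp at hc
  have hdeg : G.natDegree ≤ q ^ (h - 1) := by
    rw [hG]
    refine Polynomial.natDegree_sum_le_of_forall_le _ _ ?_
    intro i hi
    rw [Polynomial.natDegree_X_pow]
    exact Nat.pow_le_pow_right (by omega) (by simp [Finset.mem_range] at hi; omega)
  have hsub : (Finset.univ : Finset K) ⊆ G.roots.toFinset := by
    intro z _
    rw [Multiset.mem_toFinset, Polynomial.mem_roots hGne]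
    have : G.eval z = Tr q h z := by
      rw [hG]; unfold Tr; simp [Polynomial.eval_finset_sum]
    simp [Polynomial.IsRoot, this, hno z]
  have hcards : (q : ℕ) ^ h ≤ q ^ (h - 1) := by
    calc q ^ h = (Finset.univ : Finset K).card := by rw [Finset.card_univ, card_K hcard hrank]
    _ ≤ G.roots.toFinset.card := Finset.card_le_card hsub
    _ ≤ q ^ (h - 1) := le_trans (Multiset.toFinset_card_le _) (le_trans (Polynomial.card_roots' G) hdeg)
  have : q ^ (h - 1) < q ^ h := Nat.pow_lt_pow_right (by omega) (by omega)
  omega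

lemma fiber_struct (hq : IsPrimePow q) (hcard : Fintype.card F = q) (hh : 1 ≤ h)
    (hrank : Module.finrank F K = h) (w : K) (hw : w ≠ 0) :
    (∀ c : F, ∃ ν : K, Tr q h (ν * w) = algebraMap F K c) ∧
    (∀ r : K, {ν : K | Tr q h (ν * w) = r}.ncard ≤ q ^ (h - 1)) ∧
    (∀ r : K, (∃ ν : K, Tr q h (ν * w) = r) →
      {ν : K | Tr q h (ν * w) = r}.ncard = q ^ (h - 1)) := by
  classical
  set ψ : K →ₗ[F] K :=
    { toFun := fun ν => Tr q h (ν * w)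
      map_add' := by
        intro a b
        show Tr q h ((a + b) * w) = Tr q h (a * w) + Tr q h (b * w)
        rw [add_mul]
        exact tr_add (F := F) hq hcard _ _
      map_smul' := by
        intro c a
        show Tr q h ((c • a) * w) = c • Tr q h (a * w)
        rw [Algebra.smul_def, Algebra.smul_def, mul_assoc]
        exact tr_smul hcard c _ } with hψ
  have hψapp : ∀ ν : K, ψ ν = Tr q h (ν * w) := fun ν => rfl
  set Fsub : Submodule F K := LinearMap.range (Algebra.linearMap F K) with hFsub
  have hle : LinearMap.range ψ ≤ Fsub := by
    rintro t ⟨ν, rfl⟩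
    obtain ⟨c, hc⟩ := tr_mem hq hcard hrank (ν * w)
    exact ⟨c, hc⟩
  have hFr : Module.finrank F Fsub = 1 := by
    rw [LinearMap.finrank_range_of_inj]
    · exact Module.finrank_self F
    · intro a b hab
      exact (algebraMap F K).injective hab
  have hnebot : LinearMap.range ψ ≠ ⊥ := by
    obtain ⟨x, hx⟩ := tr_exists_ne_zero hq hcard hh hrank
    rw [Submodule.ne_bot_iff]
    refine ⟨Tr q h x, ⟨x * w⁻¹, ?_⟩, hx⟩
    rw [hψapp, mul_assoc, inv_mul_cancel₀ hw, mul_one]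
  have hrange : LinearMap.range ψ = Fsub := by
    refine Submodule.eq_of_le_of_finrank_le hle ?_
    rw [hFr]
    have : Module.finrank F (LinearMap.range ψ) ≠ 0 := by
      intro h0
      exact hnebot (Submodule.finrank_eq_zero.mp h0)
    omega
  have hsurj : ∀ c : F, ∃ ν : K, Tr q h (ν * w) = algebraMap F K c := by
    intro c
    have : algebraMap F K c ∈ Fsub := ⟨c, rfl⟩
    rw [← hrange] at this
    obtain ⟨ν, hν⟩ := this
    exact ⟨ν, hν⟩
  have hkerrank : Module.finrank F (LinearMap.ker ψ) = h - 1 := by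
    have := LinearMap.finrank_range_add_finrank_ker ψ
    rw [hrange, hFr, hrank] at this
    omega
  have hkercard : Nat.card (LinearMap.ker ψ) = q ^ (h - 1) := by
    haveI : Fintype (LinearMap.ker ψ) := Fintype.ofFinite _
    rw [Nat.card_eq_fintype_card, Module.card_eq_pow_finrank (K := F) (V := LinearMap.ker ψ),
      hcard, hkerrank]
  have hkerset : {ν : K | Tr q h (ν * w) = 0}.ncard = q ^ (h - 1) := by
    have hseq : {ν : K | Tr q h (ν * w) = 0} = (LinearMap.ker ψ : Set K) := by
      ext ν
      simp [LinearMap.mem_ker, hψapp]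
    have hcc := Nat.card_coe_set_eq (s := (LinearMap.ker ψ : Set K))
    rw [hseq, ← hcc]
    exact hkercard
  have hfib : ∀ r : K, (∃ ν : K, Tr q h (ν * w) = r) →
      {ν : K | Tr q h (ν * w) = r}.ncard = q ^ (h - 1) := by
    intro r ⟨ν₀, hν₀⟩
    have hseq : {ν : K | Tr q h (ν * w) = r}
        = (fun k => ν₀ + k) '' {ν : K | Tr q h (ν * w) = 0} := by
      ext ν
      simp only [Set.mem_setOf_eq, Set.mem_image]
      constructor
      · intro hν
        refine ⟨ν - ν₀, ?_, by ring⟩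
        show Tr q h ((ν - ν₀) * w) = 0
        have hν' : Tr q h (ν * w) = r := hν
        rw [sub_mul, tr_sub (F := F) hq hcard, hν', hν₀, sub_self]
      · rintro ⟨k, hk, rfl⟩
        have hk' : Tr q h (k * w) = 0 := hk
        show Tr q h ((ν₀ + k) * w) = r
        rw [add_mul, tr_add (F := F) hq hcard, hk', hν₀, add_zero]
    rw [hseq, Set.ncard_image_of_injective _ (add_right_injective ν₀), hkerset]
  refine ⟨hsurj, fun r => ?_, hfib⟩
  by_cases hr : ∃ ν : K, Tr q h (ν * w) = r
  · rw [hfib r hr]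
  · push_neg at hr
    have hemp : {ν : K | Tr q h (ν * w) = r} = ∅ :=
      Set.eq_empty_iff_forall_notMem.mpr fun ν hν => hr ν hν
    rw [hemp, Set.ncard_empty]
    exact Nat.zero_le _





lemma traceSet_eq (hq : IsPrimePow q) (hcard : Fintype.card F = q) (hh : 2 ≤ h)
    (hrank : Module.finrank F K = h) :
    traceSet q h F K =
      (Set.range (mkA q h (K := K))) ∪ (mkI q h (K := K) '' {z : K | Tr q h z = 1})
        ∪ {mkP0 q h (K := K)} := by
  have h1 : 1 ≤ h := by omega
  ext P
  constructor
  · rintro ⟨x, y, hxy, hv, rfl⟩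
    by_cases hy : y = 0
    · subst hy
      simp only [map_zero] at *
      by_cases ht : Tr q h x = 0
      · have hx : x ≠ 0 := by tauto
        refine Or.inr ?_
        show _ = mkP0 q h
        unfold mkP0
        rw [mk_eq_mk_vec]
        exact ⟨x, hx, by simp, by simp [ht], by simp⟩
      · obtain ⟨c, hc⟩ := tr_mem hq hcard hrank x
        have hcne : algebraMap F K c ≠ 0 := by rw [hc]; exact ht
        refine Or.inl (Or.inr ⟨(algebraMap F K c)⁻¹ * x, ?_, ?_⟩)
        · show Tr q h _ = 1
          rw [← map_inv₀, tr_smul hcard, map_inv₀, hc, inv_mul_cancel₀ ht]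
        · unfold mkI
          rw [mk_eq_mk_vec]
          refine ⟨(algebraMap F K c)⁻¹, inv_ne_zero hcne, ?_, ?_, ?_⟩
          · simp
          · show (algebraMap F K c)⁻¹ * Tr q h x = 1
            rw [← hc, inv_mul_cancel₀ hcne]
          · simp
    · refine Or.inl (Or.inl ⟨(algebraMap F K y)⁻¹ * x, ?_⟩)
      have hyne : algebraMap F K y ≠ 0 := by
        simpa using (map_ne_zero (algebraMap F K)).mpr hy
      unfold mkA
      rw [mk_eq_mk_vec]
      refine ⟨(algebraMap F K y)⁻¹, inv_ne_zero hyne, ?_, ?_, ?_⟩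
      · simp
      · show (algebraMap F K y)⁻¹ * Tr q h x = Tr q h ((algebraMap F K y)⁻¹ * x)
        rw [← map_inv₀, tr_smul hcard, map_inv₀]
      · show (algebraMap F K y)⁻¹ * algebraMap F K y = 1
        rw [inv_mul_cancel₀ hyne]
  · intro hP
    rcases hP with (⟨x, rfl⟩ | ⟨z, hz, rfl⟩) | hP0
    · refine ⟨x, 1, Or.inr one_ne_zero, vec_ne_zero (Or.inr (Or.inr (by simp))), ?_⟩
      unfold mkA
      rw [mk_eq_mk_vec]
      exact ⟨1, one_ne_zero, by simp, by simp, by simp⟩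
    · have hz' : Tr q h z = 1 := hz
      refine ⟨z, 0, Or.inl ?_, vec_ne_zero (Or.inr (Or.inl (by rw [hz']; exact one_ne_zero))), ?_⟩
      · intro h0
        rw [h0, tr_zero hq] at hz'
        exact zero_ne_one hz'
      · unfold mkI
        rw [mk_eq_mk_vec]
        exact ⟨1, one_ne_zero, by simp, by simp [hz'], by simp⟩
    · have hP0' : P = mkP0 q h := hP0
      subst hP0'
      have hker : {ν : K | Tr q h (ν * 1) = 0}.ncard = q ^ (h - 1) := by
        refine (fiber_struct hq hcard h1 hrank 1 one_ne_zero).2.2 0 ⟨0, ?_⟩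
        rw [zero_mul, tr_zero hq]
      have h2le : 1 < {ν : K | Tr q h (ν * 1) = 0}.ncard := by
        rw [hker]
        have : q ≤ q ^ (h - 1) := by
          calc q = q ^ 1 := (pow_one q).symm
          _ ≤ q ^ (h - 1) := Nat.pow_le_pow_right (by have := hq.two_le; omega) (by omega)
        have := hq.two_le
        omega
      obtain ⟨x₀, hx₀mem, hx₀ne⟩ := Set.exists_ne_of_one_lt_ncard h2le 0
      have hx₀ : Tr q h x₀ = 0 := by
        have : Tr q h (x₀ * 1) = 0 := hx₀mem
        rwa [mul_one] at this
      refine ⟨x₀, 0, Or.inl hx₀ne, vec_ne_zero (Or.inl hx₀ne), ?_⟩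
      unfold mkP0
      rw [mk_eq_mk_vec]
      refine ⟨x₀⁻¹, inv_ne_zero hx₀ne, ?_, by simp [hx₀], by simp⟩
      show x₀⁻¹ * x₀ = 1
      rw [inv_mul_cancel₀ hx₀ne]

lemma ncard_traceSet (hq : IsPrimePow q) (hcard : Fintype.card F = q) (hh : 2 ≤ h)
    (hrank : Module.finrank F K = h) :
    (traceSet q h F K).ncard = q ^ h + q ^ (h - 1) + 1 := by
  classical
  have h1 : 1 ≤ h := by omega
  rw [traceSet_eq hq hcard hh hrank]
  have hAinj : Function.Injective (mkA q h (K := K)) := by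
    intro x x' hxx
    unfold mkA at hxx
    rw [mk_eq_mk_vec] at hxx
    obtain ⟨u, hu, h0, h1', h2⟩ := hxx
    have : u * 1 = 1 := h2
    have hu1 : u = 1 := by rwa [mul_one] at this
    have : u * x' = x := h0
    rw [hu1, one_mul] at this
    exact this.symm
  have hIinj : Function.Injective (mkI q h (K := K)) := by
    intro z z' hzz
    unfold mkI at hzz
    rw [mk_eq_mk_vec] at hzz
    obtain ⟨u, hu, h0, h1', h2⟩ := hzz
    have : u * 1 = 1 := h1'
    have hu1 : u = 1 := by rwa [mul_one] at this
    have : u * z' = z := h0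
    rw [hu1, one_mul] at this
    exact this.symm
  have hcardA : (Set.range (mkA q h (K := K))).ncard = q ^ h := by
    rw [← Set.image_univ, Set.ncard_image_of_injective _ hAinj, Set.ncard_univ,
      Nat.card_eq_fintype_card, card_K hcard hrank]
  have hcardI : (mkI q h (K := K) '' {z : K | Tr q h z = 1}).ncard = q ^ (h - 1) := by
    rw [Set.ncard_image_of_injective _ hIinj]
    have hseq : {z : K | Tr q h z = 1} = {ν : K | Tr q h (ν * 1) = 0 + 1} := by
      ext z; simp
    rw [hseq]
    refine (fiber_struct hq hcard h1 hrank 1 one_ne_zero).2.2 (0 + 1) ?_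
    obtain ⟨ν, hν⟩ := (fiber_struct hq hcard h1 hrank 1 one_ne_zero).1 1
    exact ⟨ν, by rw [hν, map_one, zero_add]⟩
  have hd1 : Disjoint (Set.range (mkA q h (K := K)))
      (mkI q h (K := K) '' {z : K | Tr q h z = 1}) := by
    rw [Set.disjoint_left]
    rintro P ⟨x, rfl⟩ ⟨z, hz, hPz⟩
    unfold mkA mkI at hPz
    rw [mk_eq_mk_vec] at hPz
    obtain ⟨u, hu, h0, h1', h2⟩ := hPz
    have : u * 1 = 0 := h2
    rw [mul_one] at this
    exact hu this
  have hd2 : Disjoint (Set.range (mkA q h (K := K)) ∪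
      mkI q h (K := K) '' {z : K | Tr q h z = 1}) ({mkP0 q h (K := K)}) := by
    rw [Set.disjoint_right]
    rintro P hP0 hP
    have hP0' : P = mkP0 q h := hP0
    subst hP0'
    rcases hP with ⟨x, hx⟩ | ⟨z, hz, hPz⟩
    · unfold mkA mkP0 at hx
      rw [mk_eq_mk_vec] at hx
      obtain ⟨u, hu, h0, h1', h2⟩ := hx
      have e2 : u * 0 = 1 := h2
      rw [mul_zero] at e2
      exact one_ne_zero e2.symm
    · unfold mkI mkP0 at hPz
      rw [mk_eq_mk_vec] at hPz
      obtain ⟨u, hu, h0, h1', h2⟩ := hPz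
      have e1 : u * 0 = 1 := h1'
      rw [mul_zero] at e1
      exact one_ne_zero e1.symm
  rw [Set.ncard_union_eq hd2 (Set.toFinite _) (Set.toFinite _),
    Set.ncard_union_eq hd1 (Set.toFinite _) (Set.toFinite _), hcardA, hcardI,
    Set.ncard_singleton]

lemma blocking_traceSet (hq : IsPrimePow q) (hcard : Fintype.card F = q) (hh : 2 ≤ h)
    (hrank : Module.finrank F K = h) (a : Fin 3 → K) (ha : a ≠ 0) :
    ((projLine a) ∩ traceSet q h F K).Nonempty := by
  classical
  set Φ : K × F →ₗ[F] K :=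
    { toFun := fun p => a 0 * p.1 + a 1 * Tr q h p.1 + a 2 * algebraMap F K p.2
      map_add' := by
        intro p p'
        show a 0 * (p.1 + p'.1) + a 1 * Tr q h (p.1 + p'.1) + a 2 * algebraMap F K (p.2 + p'.2) = _
        rw [tr_add (F := F) hq hcard, map_add]
        ring
      map_smul' := by
        intro c p
        show a 0 * (c • p.1) + a 1 * Tr q h (c • p.1) + a 2 * algebraMap F K (c • p.2) = _
        rw [Algebra.smul_def, tr_smul hcard, smul_eq_mul, map_mul]
        simp only [RingHom.id_apply]
        rw [Algebra.smul_def]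
        ring } with hΦ
  have hnotinj : ¬ Function.Injective Φ := by
    intro hinj
    have hle := LinearMap.finrank_le_finrank_of_injective hinj
    rw [Module.finrank_prod, hrank, Module.finrank_self] at hle
    omega
  rw [injective_iff_map_eq_zero] at hnotinj
  push_neg at hnotinj
  obtain ⟨⟨x, y⟩, hΦ0, hp0⟩ := hnotinj
  have hxy : x ≠ 0 ∨ y ≠ 0 := by
    by_contra hcon
    push_neg at hcon
    exact hp0 (Prod.ext hcon.1 hcon.2)
  have hv : (![x, Tr q h x, algebraMap F K y] : Fin 3 → K) ≠ 0 := by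
    rcases hxy with hx | hy
    · exact vec_ne_zero (Or.inl hx)
    · exact vec_ne_zero (Or.inr (Or.inr ((map_ne_zero (algebraMap F K)).mpr hy)))
  refine ⟨Projectivization.mk K ![x, Tr q h x, algebraMap F K y] hv, ?_, ?_⟩
  · rw [mem_projLine_mk]
    show a 0 * x + a 1 * Tr q h x + a 2 * algebraMap F K y = 0
    exact hΦ0
  · exact ⟨x, y, hxy, hv, rfl⟩

lemma key_disjoint (hq : IsPrimePow q) (hcard : Fintype.card F = q) (hh : 2 ≤ h)
    (hrank : Module.finrank F K = h)
    (ρ δ₃ μ₂ ν : K) (e : F)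
    (hρ : ∀ c : F, algebraMap F K c ≠ ρ)
    (hδ₃ : Tr q h δ₃ = 1)
    (he : algebraMap F K e = Tr q h (δ₃ * ρ))
    (hμ₂ : Tr q h μ₂ = algebraMap F K (e + 1))
    (hgood : ∀ s : F, s ≠ -e →
      Tr q h (ν * (algebraMap F K s + ρ)⁻¹) ≠ algebraMap F K ((s + (e + 1)) / (s + e)))
    (x x' : K) (y y' : F) (hxy : x ≠ 0 ∨ y ≠ 0) (u : K) (hu : u ≠ 0)
    (e1 : u * (ν * δ₃ * algebraMap F K y') = x)
    (e2 : u * (x' + μ₂ * algebraMap F K y') = Tr q h x)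
    (e3 : u * (δ₃ * Tr q h x' + ρ * δ₃ * algebraMap F K y') = algebraMap F K y) :
    False := by
  set φ : F →+* K := (algebraMap F K : F →+* K) with hφdef
  have hφ : ∀ c : F, φ c = algebraMap F K c := fun c => rfl
  have hδ₃ne : δ₃ ≠ 0 := by
    intro h0
    rw [h0, tr_zero hq] at hδ₃
    exact zero_ne_one hδ₃
  have hcomb : ∀ c d : F, φ c + ρ * φ d = 0 → c = 0 ∧ d = 0 := by
    intro c d hcd
    by_cases hd : d = 0
    · subst hd
      rw [map_zero, mul_zero, add_zero] at hcd
      exact ⟨(map_eq_zero φ).mp hcd, rfl⟩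
    · exfalso
      apply hρ (-(c / d))
      rw [← hφ, map_neg, map_div₀]
      have hφd : φ d ≠ 0 := (map_ne_zero φ).mpr hd
      field_simp
      linear_combination -hcd
  obtain ⟨c', hc'⟩ := tr_mem hq hcard hrank x'
  by_cases hy : y = 0
  · -- case y = 0
    rw [hy, map_zero] at e3
    have hinner : δ₃ * Tr q h x' + ρ * δ₃ * algebraMap F K y' = 0 :=
      (mul_eq_zero.mp e3).resolve_left hu
    have hfac : φ c' + ρ * φ y' = 0 := by
      have : δ₃ * (φ c' + ρ * φ y') = 0 := by
        rw [hφ, hφ, hc']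
        linear_combination hinner
      rcases mul_eq_zero.mp this with h0 | h0
      · exact absurd h0 hδ₃ne
      · exact h0
    obtain ⟨hc'0, hy'0⟩ := hcomb c' y' hfac
    have hx0 : x = 0 := by
      rw [← e1, hy'0, map_zero, mul_zero, mul_zero]
    rcases hxy with hx | hyy
    · exact hx hx0
    · exact hyy hy
  · -- case y ≠ 0
    have hyK : algebraMap F K y ≠ 0 := (map_ne_zero (algebraMap F K)).mpr hy
    by_cases hy' : y' = 0
    · -- y' = 0
      rw [hy', map_zero] at e1 e2 e3
      have hx0 : x = 0 := by rw [← e1]; ring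
      have htrx0 : Tr q h x = 0 := by rw [hx0]; exact tr_zero hq
      have hx'0 : x' = 0 := by
        have h2 : u * x' = 0 := by
          rw [← htrx0, ← e2]; ring
        rcases mul_eq_zero.mp h2 with h0 | h0
        · exact absurd h0 hu
        · exact h0
      have htrx'0 : Tr q h x' = 0 := by rw [hx'0]; exact tr_zero hq
      apply hyK
      rw [← e3, htrx'0]
      ring
    · -- y' ≠ 0, the main case
      have hyK2 : algebraMap F K y' ≠ 0 := (map_ne_zero (algebraMap F K)).mpr hy'
      obtain ⟨s, hc's⟩ : ∃ s : F, c' = s * y' := ⟨c' / y', by field_simp⟩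
      set w : K := algebraMap F K s + ρ with hw
      have hwne : w ≠ 0 := by
        intro h0
        apply hρ (-s)
        rw [map_neg]
        linear_combination -h0
      -- rewrite e3
      have e3' : u * (δ₃ * (algebraMap F K y' * w)) = algebraMap F K y := by
        rw [← e3, hw]
        have : algebraMap F K s * algebraMap F K y' = algebraMap F K c' := by
          rw [← map_mul]
          congr 1
          rw [hc's]
        linear_combination u * δ₃ * this + u * δ₃ * hc'
      have huδy : u * δ₃ * algebraMap F K y' = algebraMap F K y / w := by
        rw [eq_div_iff hwne]
        linear_combination e3'
      have hx : x = ν * (algebraMap F K y / w) := by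
        rw [← e1]
        linear_combination ν * huδy
      have hxφ : x = algebraMap F K y * (ν * w⁻¹) := by
        rw [hx, div_eq_mul_inv]
        ring
      have hTrx : Tr q h x = algebraMap F K y * Tr q h (ν * w⁻¹) := by
        rw [hxφ]
        exact tr_smul hcard y _
      obtain ⟨τ, hτ⟩ := tr_mem hq hcard hrank (ν * w⁻¹)
      -- Tr (δ₃ * w) = φ (s + e)
      have hTrδw : Tr q h (δ₃ * w) = algebraMap F K (s + e) := by
        have hsplit : δ₃ * w = algebraMap F K s * δ₃ + δ₃ * ρ := by
          rw [hw]; ring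
        rw [hsplit, tr_add (F := F) hq hcard, tr_smul hcard, hδ₃, ← he, map_add, mul_one]
      -- u⁻¹ * φ y = δ₃ * (φ y' * w)
      have huinv : u⁻¹ * algebraMap F K y = δ₃ * (algebraMap F K y' * w) := by
        rw [← e3']
        field_simp
      -- the trace of x'
      have hx'eq : x' = u⁻¹ * Tr q h x - μ₂ * algebraMap F K y' := by
        have h2 : u⁻¹ * (u * (x' + μ₂ * algebraMap F K y')) = u⁻¹ * Tr q h x := by rw [e2]
        rw [← mul_assoc, inv_mul_cancel₀ hu, one_mul] at h2
        linear_combination h2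
      have huTrx : u⁻¹ * Tr q h x = algebraMap F K (τ * y') * (δ₃ * w) := by
        rw [hTrx, map_mul]
        calc u⁻¹ * (algebraMap F K y * Tr q h (ν * w⁻¹))
            = (u⁻¹ * algebraMap F K y) * Tr q h (ν * w⁻¹) := by ring
        _ = δ₃ * (algebraMap F K y' * w) * algebraMap F K τ := by rw [huinv, hτ]
        _ = algebraMap F K τ * algebraMap F K y' * (δ₃ * w) := by ring
      have hTrx' : Tr q h x' = algebraMap F K (τ * y' * (s + e)) - algebraMap F K (y' * (e + 1)) := by
        rw [hx'eq, tr_sub (F := F) hq hcard]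
        congr 1
        · rw [huTrx, tr_smul hcard, hTrδw, ← map_mul]
        · rw [mul_comm μ₂, tr_smul hcard, hμ₂, ← map_mul]
      -- pass to F
      have hFeq : c' = τ * y' * (s + e) - y' * (e + 1) := by
        apply (algebraMap F K).injective
        rw [map_sub, ← hTrx', hc']
      have hseq : s = τ * (s + e) - (e + 1) := by
        have := hFeq
        rw [hc's] at this
        have h2 : (s - (τ * (s + e) - (e + 1))) * y' = 0 := by linear_combination this
        rcases mul_eq_zero.mp h2 with h0 | h0
        · exact sub_eq_zero.mp h0
        · exact absurd h0 hy'
      by_cases hse : s + e = 0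
      · rw [hse, mul_zero, zero_sub] at hseq
        have : (1 : F) = 0 := by linear_combination hseq - hse
        exact one_ne_zero this
      · have hsne : s ≠ -e := fun h0 => hse (by rw [h0]; ring)
        apply hgood s hsne
        rw [← hw, ← hτ]
        congr 1
        rw [eq_div_iff hse]
        linear_combination -hseq

lemma exists_constants (hq : IsPrimePow q) (hcard : Fintype.card F = q) (hh : 2 ≤ h)
    (hrank : Module.finrank F K = h) :
    ∃ (ρ δ₃ μ₂ ν : K) (e : F),
      (∀ c : F, algebraMap F K c ≠ ρ) ∧ Tr q h δ₃ = 1 ∧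
      algebraMap F K e = Tr q h (δ₃ * ρ) ∧
      Tr q h μ₂ = algebraMap F K (e + 1) ∧ ν ≠ 0 ∧
      (∀ s : F, s ≠ -e →
        Tr q h (ν * (algebraMap F K s + ρ)⁻¹) ≠ algebraMap F K ((s + (e + 1)) / (s + e))) := by
  classical
  have h1 : 1 ≤ h := by omega
  have hq2 : 2 ≤ q := hq.two_le
  -- ρ outside the base field image
  have hρ_ex : ∃ ρ : K, ∀ c : F, algebraMap F K c ≠ ρ := by
    by_contra hno
    push_neg at hno
    have hsurj : Function.Surjective (algebraMap F K) := fun ρ => hno ρ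
    have hle := Fintype.card_le_of_surjective _ hsurj
    rw [hcard, card_K hcard hrank] at hle
    have : q ^ 1 < q ^ h := Nat.pow_lt_pow_right (by omega) (by omega)
    rw [pow_one] at this
    omega
  obtain ⟨ρ, hρ⟩ := hρ_ex
  -- δ₃ with trace 1
  obtain ⟨δ₃, hδ₃'⟩ := (fiber_struct hq hcard h1 hrank 1 one_ne_zero).1 1
  rw [mul_one, map_one] at hδ₃'
  obtain ⟨e, he⟩ := tr_mem hq hcard hrank (δ₃ * ρ)
  obtain ⟨μ₂, hμ₂'⟩ := (fiber_struct hq hcard h1 hrank 1 one_ne_zero).1 (e + 1)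
  rw [mul_one] at hμ₂'
  -- the bad sets
  set badF : F → Finset K := fun s => Finset.univ.filter
    (fun ν => Tr q h (ν * (algebraMap F K s + ρ)⁻¹)
      = algebraMap F K ((s + (e + 1)) / (s + e))) with hbadF
  have hwne : ∀ s : F, algebraMap F K s + ρ ≠ 0 := by
    intro s h0
    apply hρ (-s)
    rw [map_neg]
    linear_combination -h0
  have hbound : ∀ s : F, (badF s).card ≤ q ^ (h - 1) := by
    intro s
    have hcoe : ((badF s) : Set K) = {ν : K | Tr q h (ν * (algebraMap F K s + ρ)⁻¹)
        = algebraMap F K ((s + (e + 1)) / (s + e))} := by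
      ext ν
      simp [hbadF]
    have := (fiber_struct hq hcard h1 hrank ((algebraMap F K s + ρ)⁻¹)
      (inv_ne_zero (hwne s))).2.1 (algebraMap F K ((s + (e + 1)) / (s + e)))
    rw [← hcoe, Set.ncard_coe_finset] at this
    exact this
  set S : Finset F := Finset.univ.erase (-e) with hS
  have hScard : S.card = q - 1 := by
    rw [hS, Finset.card_erase_of_mem (Finset.mem_univ _), Finset.card_univ, hcard]
  set Bad : Finset K := insert (0 : K) (S.biUnion badF) with hBad
  have hBadcard : Bad.card ≤ 1 + (q - 1) * q ^ (h - 1) := by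
    refine le_trans (Finset.card_insert_le _ _) ?_
    have hb := Finset.card_biUnion_le (s := S) (t := badF)
    have hsum : ∑ s ∈ S, (badF s).card ≤ (q - 1) * q ^ (h - 1) := by
      calc ∑ s ∈ S, (badF s).card ≤ ∑ _s ∈ S, q ^ (h - 1) :=
        Finset.sum_le_sum fun s _ => hbound s
      _ = (q - 1) * q ^ (h - 1) := by rw [Finset.sum_const, hScard, smul_eq_mul]
    omega
  have hlt : Bad.card < q ^ h := by
    have hA : 2 ≤ q ^ (h - 1) := by
      have : q ^ 1 ≤ q ^ (h - 1) := Nat.pow_le_pow_right (by omega) (by omega)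
      rw [pow_one] at this
      omega
    have hqh : q ^ h = q * q ^ (h - 1) := by
      rw [← pow_succ']
      congr 1
      omega
    have hsub : (q - 1) * q ^ (h - 1) + q ^ (h - 1) = q * q ^ (h - 1) := by
      rw [Nat.sub_one_mul]
      have : q ^ (h - 1) ≤ q * q ^ (h - 1) := Nat.le_mul_of_pos_left _ (by omega)
      omega
    omega
  have hex : ∃ ν : K, ν ∈ Finset.univ \ Bad := by
    have hsubu : Bad ⊆ Finset.univ := Finset.subset_univ _
    have : 0 < (Finset.univ \ Bad).card := by
      rw [Finset.card_sdiff_of_subset hsubu, Finset.card_univ, card_K hcard hrank]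
      omega
    obtain ⟨ν, hν⟩ := Finset.card_pos.mp this
    exact ⟨ν, hν⟩
  obtain ⟨ν, hν⟩ := hex
  rw [Finset.mem_sdiff] at hν
  have hνBad := hν.2
  rw [hBad, Finset.mem_insert] at hνBad
  push_neg at hνBad
  obtain ⟨hν0, hνb⟩ := hνBad
  refine ⟨ρ, δ₃, μ₂, ν, e, hρ, hδ₃', he, hμ₂', hν0, ?_⟩
  intro s hsne hcon
  apply hνb
  rw [Finset.mem_biUnion]
  refine ⟨s, ?_, ?_⟩
  · rw [hS, Finset.mem_erase]
    exact ⟨hsne, Finset.mem_univ _⟩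
  · rw [hbadF]
    simp only [Finset.mem_filter, Finset.mem_univ, true_and]
    exact hcon

end Stmt13

open Stmt13 in
set_option maxHeartbeats 2000000 in
/-- For every prime power `q` and `h ≥ 2` there exist two disjoint
blocking sets of `PG(2, q^h)`, each of size `q^h + q^(h-1) + 1`; hence a 2-fold
blocking set of size `2(q^h + q^(h-1) + 1)`. -/
theorem stmt_13 {F K : Type*} [Field F] [Field K] [Algebra F K]
    [Fintype F] [Fintype K]
    (q h : ℕ) (hq : IsPrimePow q) (hcard : Fintype.card F = q)
    (hh : 2 ≤ h) (hrank : Module.finrank F K = h) :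
    ∃ B₁ B₂ : Set (Projectivization K (Fin 3 → K)),
      Disjoint B₁ B₂ ∧
      B₁.ncard = q ^ h + q ^ (h - 1) + 1 ∧
      B₂.ncard = q ^ h + q ^ (h - 1) + 1 ∧
      (∀ a : Fin 3 → K, a ≠ 0 → (projLine a ∩ B₁).Nonempty) ∧
      (∀ a : Fin 3 → K, a ≠ 0 → (projLine a ∩ B₂).Nonempty) ∧
      (B₁ ∪ B₂).ncard = 2 * (q ^ h + q ^ (h - 1) + 1) ∧
      (∀ a : Fin 3 → K, a ≠ 0 → 2 ≤ (projLine a ∩ (B₁ ∪ B₂)).ncard) := by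
  classical
  haveI : Finite (Projectivization K (Fin 3 → K)) := Quotient.finite _
  obtain ⟨ρ, δ₃, μ₂, ν, e, hρ, hδ₃, he, hμ₂, hν0, hgood⟩ := exists_constants hq hcard hh hrank
  have hδ₃ne : δ₃ ≠ 0 := by
    intro h0
    rw [h0, tr_zero hq] at hδ₃
    exact zero_ne_one hδ₃
  have hμ₁ne : ν * δ₃ ≠ 0 := mul_ne_zero hν0 hδ₃ne
  set σL : (Fin 3 → K) →ₗ[K] (Fin 3 → K) :=
    { toFun := fun v => ![ν * δ₃ * v 2, v 0 + μ₂ * v 2, δ₃ * v 1 + ρ * δ₃ * v 2]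
      map_add' := by
        intro v w
        funext i
        fin_cases i <;> simp <;> ring
      map_smul' := by
        intro c v
        funext i
        fin_cases i <;> simp <;> ring } with hσL
  have hσinj : Function.Injective σL := by
    intro v w hvw
    have h0 : ν * δ₃ * v 2 = ν * δ₃ * w 2 := congrFun hvw 0
    have h1' : v 0 + μ₂ * v 2 = w 0 + μ₂ * w 2 := congrFun hvw 1
    have h2 : δ₃ * v 1 + ρ * δ₃ * v 2 = δ₃ * w 1 + ρ * δ₃ * w 2 := congrFun hvw 2
    have hv2 : v 2 = w 2 := mul_left_cancel₀ hμ₁ne h0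
    have hv0 : v 0 = w 0 := by linear_combination h1' - μ₂ * hv2
    have hv1 : v 1 = w 1 :=
      mul_left_cancel₀ hδ₃ne (by linear_combination h2 - ρ * δ₃ * hv2)
    funext i
    fin_cases i
    · exact hv0
    · exact hv1
    · exact hv2
  have hmapinj : Function.Injective (Projectivization.map σL hσinj) :=
    Projectivization.map_injective σL hσinj
  have hdisj : Disjoint (traceSet q h F K)
      (Projectivization.map σL hσinj '' traceSet q h F K) := by
    rw [Set.disjoint_left]
    rintro P ⟨x, y, hxy, hv, rfl⟩ ⟨Q, hQ, hmap⟩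
    obtain ⟨x', y', hxy', hv', rfl⟩ := hQ
    rw [Projectivization.map_mk] at hmap
    replace hmap := hmap.symm
    rw [mk_eq_mk_vec] at hmap
    obtain ⟨u, hu, h0, h1, h2⟩ := hmap
    have e1 : u * (ν * δ₃ * algebraMap F K y') = x := h0
    have e2 : u * (x' + μ₂ * algebraMap F K y') = Tr q h x := h1
    have e3 : u * (δ₃ * Tr q h x' + ρ * δ₃ * algebraMap F K y') = algebraMap F K y := h2
    exact key_disjoint hq hcard hh hrank ρ δ₃ μ₂ ν e hρ hδ₃ he hμ₂ hgood
      x x' y y' hxy u hu e1 e2 e3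
  have hb2 : ∀ a : Fin 3 → K, a ≠ 0 → (projLine a ∩ (Projectivization.map σL hσinj '' traceSet q h F K)).Nonempty := by
    intro a ha
    set a' : Fin 3 → K :=
      ![a 1, a 2 * δ₃, a 0 * (ν * δ₃) + a 1 * μ₂ + a 2 * (ρ * δ₃)] with ha'
    have ha'ne : a' ≠ 0 := by
      intro h0
      have c0 : a 1 = 0 := congrFun h0 0
      have c1 : a 2 * δ₃ = 0 := congrFun h0 1
      have c2 : a 0 * (ν * δ₃) + a 1 * μ₂ + a 2 * (ρ * δ₃) = 0 := congrFun h0 2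
      have ha2 : a 2 = 0 := by
        rcases mul_eq_zero.mp c1 with hA | hA
        · exact hA
        · exact absurd hA hδ₃ne
      have ha0 : a 0 = 0 := by
        rw [c0, ha2] at c2
        have : a 0 * (ν * δ₃) = 0 := by linear_combination c2
        rcases mul_eq_zero.mp this with hA | hA
        · exact hA
        · exact absurd hA hμ₁ne
      apply ha
      funext i
      fin_cases i
      · exact ha0
      · exact c0
      · exact ha2
    obtain ⟨P, hPl, hPB⟩ := blocking_traceSet hq hcard hh hrank a' ha'ne
    refine ⟨Projectivization.map σL hσinj P, ?_, ⟨P, hPB, rfl⟩⟩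
    obtain ⟨x, y, hxy, hv, rfl⟩ := hPB
    rw [mem_projLine_mk] at hPl
    rw [Projectivization.map_mk, mem_projLine_mk]
    have hPl' : a 1 * x + (a 2 * δ₃) * Tr q h x
        + (a 0 * (ν * δ₃) + a 1 * μ₂ + a 2 * (ρ * δ₃)) * algebraMap F K y = 0 := hPl
    show a 0 * (ν * δ₃ * algebraMap F K y) + a 1 * (x + μ₂ * algebraMap F K y)
        + a 2 * (δ₃ * Tr q h x + ρ * δ₃ * algebraMap F K y) = 0
    linear_combination hPl'
  refine ⟨traceSet q h F K, Projectivization.map σL hσinj '' traceSet q h F K,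
    ?_, ?_, ?_, ?_, ?_, ?_, ?_⟩
  case refine_1 => exact hdisj
  case refine_2 => exact ncard_traceSet hq hcard hh hrank
  case refine_3 =>
    rw [Set.ncard_image_of_injective _ hmapinj]
    exact ncard_traceSet hq hcard hh hrank
  case refine_4 => exact fun a ha => blocking_traceSet hq hcard hh hrank a ha
  case refine_5 => exact hb2

  case refine_6 =>
    rw [Set.ncard_union_eq hdisj (Set.toFinite _) (Set.toFinite _)]
    rw [ncard_traceSet hq hcard hh hrank,
      Set.ncard_image_of_injective _ hmapinj, ncard_traceSet hq hcard hh hrank]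
    ring
  case refine_7 =>
    intro a ha
    obtain ⟨P₁, hP₁l, hP₁⟩ := blocking_traceSet hq hcard hh hrank a ha
    obtain ⟨P₂, hP₂l, hP₂⟩ := hb2 a ha
    have hne : P₁ ≠ P₂ := by
      intro hE
      exact (Set.disjoint_left.mp hdisj hP₁) (hE ▸ hP₂)
    have hsub : ({P₁, P₂} : Set (Projectivization K (Fin 3 → K)))
        ⊆ projLine a ∩ (traceSet q h F K ∪ Projectivization.map σL hσinj '' traceSet q h F K) := by
      intro P hP
      rcases hP with hP | hP
      · subst hP
        exact ⟨hP₁l, Or.inl hP₁⟩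
      · have : P = P₂ := hP
        subst this
        exact ⟨hP₂l, Or.inr hP₂⟩
    calc (2 : ℕ) = ({P₁, P₂} : Set (Projectivization K (Fin 3 → K))).ncard :=
        (Set.ncard_pair hne).symm
    _ ≤ _ := Set.ncard_le_ncard hsub (Set.toFinite _)
end

section
/- Let q be a prime power, h ≥ 2, f : F_{q^h} → F_q a nonzero F_q-linear map, α ∈ F_{q^h} \ F_q, β ∈ F_{q^h}^*, and let L = {(x : f(x) + yα : yβ) : x ∈ F_{q^h}, y ∈ F_q, (x,y) ≠ (0,0)} ⊆ PG(2, q^h). Let φ be the projectivity (x:y:z) ↦ (z:x:y). Suppose (1) f(α/β) ≠ 1, and (2) for all k ∈ F_q, k ≠ f(α²/β) + (f(β²/(α+k)) + k)·f(α/β) + k·f(β²/(α+k))·f(1/β). Then L ∩ φ(L) = ∅, and consequently L, φ(L), φ²(L) are pairwise disjoint and their union is a 3-fold blocking set of size 3(q^h + q^{h-1} + 1). -/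
/-!
`L` is the `F`-linear set of the `(h+1)`-dimensional `F`-subspace `U = {(x, f x + yα, yβ)}` of
`K³`. Since `dim_F U > dim_F K`, every `K`-linear form vanishes on some nonzero vector of `U`, so
`L` meets every line, and so do its images under the coordinate permutation `φ`.

Rescaling by `y⁻¹ ∈ F` puts every point of `L` in the form `(x : f x + α : β)` or `(x : f x : 0)`,
and the points of `φ(L)` are `(β : x' : f x' + α)` or `(0 : x' : f x')`. Of the four possible
coincidences, two are impossible by comparing zero coordinates, one forces `f (α/β) = 1`, and the
generic one forces `k = f x'` to be the value excluded by the second condition. As `φ³ = 1`,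
`L`, `φ(L)`, `φ²(L)` are pairwise disjoint, hence every line meets their union at least three
times. Finally `L` consists of the `q^h` points with `z ≠ 0`, the `q^(h-1)` points `(t : 1 : 0)`
with `f t = 1`, and `(1 : 0 : 0)`.
-/

open scoped LinearAlgebra.Projectivization Matrix
open Projectivization Module

namespace Projectivization

variable {K ι : Type*} [Field K]

lemma apply_eq_zero_iff_of_mk_eq {v w : ι → K} {hv : v ≠ 0} {hw : w ≠ 0}
    (h : mk K v hv = mk K w hw) (i : ι) : v i = 0 ↔ w i = 0 := by
  obtain ⟨a, rfl⟩ := (mk_eq_mk_iff K v w hv hw).1 h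
  simp [Units.smul_def]

lemma eq_of_mk_eq_of_apply_eq {v w : ι → K} {hv : v ≠ 0} {hw : w ≠ 0}
    (h : mk K v hv = mk K w hw) {i : ι} (hi : v i = w i) (hwi : w i ≠ 0) : v = w := by
  obtain ⟨a, rfl⟩ := (mk_eq_mk_iff K v w hv hw).1 h
  have ha : (a : K) = 1 := by simpa [Units.smul_def, hwi] using hi
  simp [Units.smul_def, ha]

end Projectivization

lemma Module.Dual.natCard_preimage_singleton {F V : Type*} [Field F] [AddCommGroup V]
    [Module F V] [Finite F] [Finite V] {f : Module.Dual F V} (hf : f ≠ 0) (c : F) :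
    Nat.card (f ⁻¹' {c}) = Nat.card F ^ (finrank F V - 1) := by
  calc Nat.card (f ⁻¹' {c}) = Nat.card (LinearMap.ker f) :=
        Nat.card_congr (AddMonoidHom.fiberEquivKerOfSurjective (f := f.toAddMonoidHom)
          (LinearMap.surjective hf) c)
    _ = Nat.card F ^ (finrank F V - 1) := by
      rw [← finrank_ker_add_one_of_ne_zero hf, Nat.add_sub_cancel]
      exact Module.natCard_eq_pow_finrank

lemma disjoint_images_of_order_three {α : Type*} {φ : α → α} (hφ : ∀ x, φ (φ (φ x)) = x)
    {S : Set α} (h : Disjoint S (φ '' S)) :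
    Disjoint S (φ '' (φ '' S)) ∧ Disjoint (φ '' S) (φ '' (φ '' S)) := by
  have hinj : Function.Injective φ := Function.LeftInverse.injective (g := φ ∘ φ) hφ
  have h₂₃ : Disjoint (φ '' S) (φ '' (φ '' S)) := (Set.disjoint_image_iff hinj).2 h
  refine ⟨?_, h₂₃⟩
  have hS : φ '' (φ '' (φ '' S)) = S := by simp [Set.image_image, hφ]
  have h₃₁ := (Set.disjoint_image_iff hinj).2 h₂₃
  rw [hS] at h₃₁
  exact h₃₁.symm

lemma smul_comp_finRotate_symm_eq_iff {R : Type*} [Mul R] (a : R) (v w : Fin 3 → R) :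
    a • (v ∘ (finRotate 3).symm) = w ↔ a * v 2 = w 0 ∧ a * v 0 = w 1 ∧ a * v 1 = w 2 := by
  constructor
  · rintro rfl
    exact ⟨rfl, rfl, rfl⟩
  · rintro ⟨h0, h1, h2⟩
    ext i
    fin_cases i
    exacts [h0, h1, h2]

section Plane

variable {K : Type*} [Field K]

lemma mk_mem_projLine_iff (a v : Fin 3 → K) (hv : v ≠ 0) :
    mk K v hv ∈ projLine a ↔ a ⬝ᵥ v = 0 := by
  obtain ⟨c, hc⟩ := exists_smul_eq_mk_rep K v hv
  change a ⬝ᵥ (mk K v hv).rep = 0 ↔ _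
  rw [← hc, Units.smul_def, dotProduct_smul, smul_eq_mul, mul_eq_zero]
  simp [c.ne_zero]

def permCoords (e : Fin 3 ≃ Fin 3) : ℙ K (Fin 3 → K) → ℙ K (Fin 3 → K) :=
  map (LinearEquiv.funCongrLeft K K e).toLinearMap (LinearEquiv.funCongrLeft K K e).injective

lemma permCoords_mk (e : Fin 3 ≃ Fin 3) (v : Fin 3 → K) (hv : v ≠ 0) (hve : v ∘ e ≠ 0) :
    permCoords e (mk K v hv) = mk K (v ∘ e) hve :=
  rfl

lemma permCoords_injective (e : Fin 3 ≃ Fin 3) : Function.Injective (permCoords (K := K) e) :=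
  map_injective _ _

lemma permCoords_mem_projLine_iff (e : Fin 3 ≃ Fin 3) (a : Fin 3 → K) (P : ℙ K (Fin 3 → K)) :
    permCoords e P ∈ projLine a ↔ P ∈ projLine (a ∘ e.symm) := by
  induction P with
  | h v hv =>
    rw [permCoords_mk e v hv (fun h => hv (by ext i; simpa using congrFun h (e.symm i))),
      mk_mem_projLine_iff, mk_mem_projLine_iff, comp_equiv_symm_dotProduct]

lemma permCoords_finRotate_symm_apply_apply_apply (P : ℙ K (Fin 3 → K)) :
    permCoords (finRotate 3).symm (permCoords (finRotate 3).symm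
      (permCoords (finRotate 3).symm P)) = P := by
  induction P with
  | h v hv =>
    simp only [permCoords, map_mk]
    congr 1
    ext i
    fin_cases i <;> rfl

def MeetsEveryLine (S : Set (ℙ K (Fin 3 → K))) : Prop :=
  ∀ a : Fin 3 → K, a ≠ 0 → (projLine a ∩ S).Nonempty

lemma MeetsEveryLine.image_permCoords {S : Set (ℙ K (Fin 3 → K))} (hS : MeetsEveryLine S)
    (e : Fin 3 ≃ Fin 3) : MeetsEveryLine (permCoords e '' S) := by
  intro a ha
  obtain ⟨P, hPa, hPS⟩ := hS (a ∘ e.symm) (fun h => ha (by ext i; simpa using congrFun h (e i)))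
  exact ⟨permCoords e P, (permCoords_mem_projLine_iff e a P).2 hPa, P, hPS, rfl⟩

lemma three_le_ncard_projLine_inter_union [Finite K] {S₁ S₂ S₃ : Set (ℙ K (Fin 3 → K))}
    (h₁ : MeetsEveryLine S₁) (h₂ : MeetsEveryLine S₂) (h₃ : MeetsEveryLine S₃)
    (h₁₂ : Disjoint S₁ S₂) (h₁₃ : Disjoint S₁ S₃) (h₂₃ : Disjoint S₂ S₃)
    {a : Fin 3 → K} (ha : a ≠ 0) : 3 ≤ (projLine a ∩ (S₁ ∪ S₂ ∪ S₃)).ncard := by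
  obtain ⟨P₁, hP₁a, hP₁⟩ := h₁ a ha
  obtain ⟨P₂, hP₂a, hP₂⟩ := h₂ a ha
  obtain ⟨P₃, hP₃a, hP₃⟩ := h₃ a ha
  have hsub : {P₁, P₂, P₃} ⊆ projLine a ∩ (S₁ ∪ S₂ ∪ S₃) := by
    rintro P (rfl | rfl | rfl)
    exacts [⟨hP₁a, .inl (.inl hP₁)⟩, ⟨hP₂a, .inl (.inr hP₂)⟩, ⟨hP₃a, .inr hP₃⟩]
  calc 3 = ({P₁, P₂, P₃} : Set _).ncard :=
        (Set.ncard_eq_three.2 ⟨P₁, P₂, P₃, h₁₂.ne_of_mem hP₁ hP₂, h₁₃.ne_of_mem hP₁ hP₃,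
          h₂₃.ne_of_mem hP₂ hP₃, rfl⟩).symm
    _ ≤ _ := Set.ncard_le_ncard hsub

end Plane

section LinearSet

variable {F K : Type*} [Field F] [Field K] [Algebra F K] (f : K →ₗ[F] F) (α β : K)

def linearSetParam : K × F →ₗ[F] Fin 3 → K where
  toFun p := ![p.1, algebraMap F K (f p.1) + algebraMap F K p.2 * α, algebraMap F K p.2 * β]
  map_add' p p' := by ext i; fin_cases i <;> simp <;> ring
  map_smul' c p := by
    have hf : f (algebraMap F K c * p.1) = c * f p.1 := by
      rw [← Algebra.smul_def, map_smul, smul_eq_mul]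
    ext i; fin_cases i <;> simp [Algebra.smul_def, hf] <;> ring

@[simp]
lemma linearSetParam_apply (x : K) (y : F) : linearSetParam f α β (x, y) =
    ![x, algebraMap F K (f x) + algebraMap F K y * α, algebraMap F K y * β] :=
  rfl

def linearSet : Set (ℙ K (Fin 3 → K)) :=
  {P | ∃ (x : K) (y : F), (x ≠ 0 ∨ y ≠ 0) ∧
    ∃ hv : linearSetParam f α β (x, y) ≠ 0, P = mk K (linearSetParam f α β (x, y)) hv}

variable {f α β}

lemma linearSetParam_ne_zero_of_ne_zero {x : K} (hx : x ≠ 0) (y : F) :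
    linearSetParam f α β (x, y) ≠ 0 :=
  fun h => hx (by simpa using congrFun h 0)

lemma linearSetParam_ne_zero (hβ : β ≠ 0) {x : K} {y : F} (hxy : x ≠ 0 ∨ y ≠ 0) :
    linearSetParam f α β (x, y) ≠ 0 := by
  rcases hxy with hx | hy
  · exact linearSetParam_ne_zero_of_ne_zero hx y
  · exact fun h => hy (by simpa [hβ] using congrFun h 2)

lemma mk_linearSetParam_eq_of_eq_smul {p q : K × F} {c : F} (h : q = c • p)
    (hq : linearSetParam f α β q ≠ 0) (hp : linearSetParam f α β p ≠ 0) :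
    mk K (linearSetParam f α β q) hq = mk K (linearSetParam f α β p) hp := by
  subst h
  exact (mk_eq_mk_iff' K _ _ _ _).2 ⟨algebraMap F K c, by rw [map_smul, algebraMap_smul]⟩

lemma linearSet_meetsEveryLine [FiniteDimensional F K] (hβ : β ≠ 0) :
    MeetsEveryLine (linearSet f α β) := by
  intro a ha
  let g : K × F →ₗ[F] K :=
    ((dotProductBilin K K a).restrictScalars F) ∘ₗ linearSetParam f α β
  have hker : LinearMap.ker g ≠ ⊥ :=
    LinearMap.ker_ne_bot_of_finrank_lt (by simp [Module.finrank_prod])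
  obtain ⟨⟨x, y⟩, hg, hxy⟩ := Submodule.exists_mem_ne_zero_of_ne_bot hker
  have hxy : x ≠ 0 ∨ y ≠ 0 := by contrapose! hxy; simp [hxy]
  exact ⟨_, (mk_mem_projLine_iff _ _ (linearSetParam_ne_zero hβ hxy)).2 (by simpa [g] using hg),
    x, y, hxy, linearSetParam_ne_zero hβ hxy, rfl⟩

lemma linearSet_eq_union (hβ : β ≠ 0) :
    linearSet f α β = Set.range (fun x => mk K (linearSetParam f α β (x, 1))
        (linearSetParam_ne_zero hβ (.inr one_ne_zero))) ∪
      Set.range (fun x : {x : K // x ≠ 0} => mk K (linearSetParam f α β (x, 0))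
        (linearSetParam_ne_zero_of_ne_zero x.2 0)) := by
  ext P
  constructor
  · rintro ⟨x, y, hxy, hv, rfl⟩
    by_cases hy : y = 0
    · subst hy
      exact .inr ⟨⟨x, hxy.resolve_right (not_not.2 rfl)⟩, rfl⟩
    · exact .inl ⟨y⁻¹ • x, mk_linearSetParam_eq_of_eq_smul (c := y⁻¹) (by simp [hy]) _ _⟩
  · rintro (⟨x, rfl⟩ | ⟨⟨x, hx⟩, rfl⟩)
    exacts [⟨x, 1, .inr one_ne_zero, _, rfl⟩, ⟨x, 0, .inl hx, _, rfl⟩]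

lemma add_algebraMap_ne_zero (hα : α ∉ Set.range (algebraMap F K)) (s : F) :
    α + algebraMap F K s ≠ 0 :=
  fun h => hα ⟨-s, by rw [map_neg]; linear_combination -h⟩

lemma linearSetParam_one_ne_smul_rotate_one (hα : α ∉ Set.range (algebraMap F K)) (hβ : β ≠ 0)
    (h2 : ∀ k : F, k ≠ f (α ^ 2 / β)
      + (f (β ^ 2 / (α + algebraMap F K k)) + k) * f (α / β)
      + k * f (β ^ 2 / (α + algebraMap F K k)) * f (1 / β))
    (x x' a : K) :
    a • (linearSetParam f α β (x', 1) ∘ (finRotate 3).symm) ≠ linearSetParam f α β (x, 1) := by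
  intro h
  obtain ⟨e0, e1, e2⟩ := (smul_comp_finRotate_symm_eq_iff _ _ _).1 h
  simp only [linearSetParam_apply, Matrix.cons_val_zero, Matrix.cons_val_one, Matrix.cons_val_two,
    Matrix.head_cons, Matrix.tail_cons, map_one, one_mul] at e0 e1 e2
  set k := f x'
  have hk := add_algebraMap_ne_zero hα k
  have hx : x = β ^ 2 / (α + algebraMap F K k) := by
    rw [eq_div_iff hk]; linear_combination -(α + algebraMap F K k) * e0 + β * e2
  have hx' : x' = α ^ 2 / β + (f x + k) • (α / β) + (f x * k) • (1 / β) := by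
    simp only [Algebra.smul_def, map_add, map_mul]
    field_simp
    linear_combination -x' * e2 + (algebraMap F K k + α) * e1
  apply h2 k
  have := congrArg f hx'
  simp only [map_add, map_smul, smul_eq_mul] at this
  rw [← hx]
  linear_combination this

lemma linearSetParam_one_ne_smul_rotate_zero (hβ : β ≠ 0) (h1 : f (α / β) ≠ 1) (x x' a : K) :
    a • (linearSetParam f α β (x', 0) ∘ (finRotate 3).symm) ≠ linearSetParam f α β (x, 1) := by
  intro h
  obtain ⟨e0, e1, e2⟩ := (smul_comp_finRotate_symm_eq_iff _ _ _).1 h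
  simp only [linearSetParam_apply, Matrix.cons_val_zero, Matrix.cons_val_one, Matrix.cons_val_two,
    Matrix.head_cons, Matrix.tail_cons, map_zero, map_one, zero_mul, one_mul, mul_zero,
    add_zero] at e0 e1 e2
  subst e0
  rw [map_zero, map_zero, zero_add] at e1
  have hfx' : f x' ≠ 0 := by
    rintro hfx'
    rw [hfx', map_zero, mul_zero] at e2
    exact hβ e2.symm
  have hx' : x' = f x' • (α / β) := by
    rw [Algebra.smul_def]
    field_simp
    linear_combination algebraMap F K (f x') * e1 - x' * e2
  apply h1
  have := congrArg f hx'
  rw [map_smul, smul_eq_mul] at this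
  exact (mul_eq_left₀ hfx').1 this.symm

lemma linearSetParam_zero_ne_smul_rotate_one (hα : α ∉ Set.range (algebraMap F K)) {x : K}
    (hx : x ≠ 0) (x' a : K) :
    a • (linearSetParam f α β (x', 1) ∘ (finRotate 3).symm) ≠ linearSetParam f α β (x, 0) := by
  intro h
  obtain ⟨e0, -, e2⟩ := (smul_comp_finRotate_symm_eq_iff _ _ _).1 h
  simp only [linearSetParam_apply, Matrix.cons_val_zero, Matrix.cons_val_one, Matrix.cons_val_two,
    Matrix.head_cons, Matrix.tail_cons, map_zero, map_one, zero_mul, one_mul,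
    mul_eq_zero] at e0 e2
  rcases e2 with rfl | h
  · exact hx (by simpa using e0.symm)
  · exact add_algebraMap_ne_zero hα (f x') (by linear_combination h)

lemma linearSetParam_zero_ne_smul_rotate_zero {x : K} (hx : x ≠ 0) (x' a : K) :
    a • (linearSetParam f α β (x', 0) ∘ (finRotate 3).symm) ≠ linearSetParam f α β (x, 0) := by
  intro h
  obtain ⟨e0, -, -⟩ := (smul_comp_finRotate_symm_eq_iff _ _ _).1 h
  exact hx (by simpa using e0.symm)

lemma disjoint_linearSet_image_permCoords (hα : α ∉ Set.range (algebraMap F K)) (hβ : β ≠ 0)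
    (h1 : f (α / β) ≠ 1)
    (h2 : ∀ k : F, k ≠ f (α ^ 2 / β)
      + (f (β ^ 2 / (α + algebraMap F K k)) + k) * f (α / β)
      + k * f (β ^ 2 / (α + algebraMap F K k)) * f (1 / β)) :
    Disjoint (linearSet f α β) (permCoords (finRotate 3).symm '' linearSet f α β) := by
  rw [Set.disjoint_right]
  rintro _ ⟨Q, hQ, rfl⟩ hP
  rw [linearSet_eq_union hβ] at hP hQ
  rcases hQ with ⟨x', rfl⟩ | ⟨⟨x', hx'⟩, rfl⟩ <;> rcases hP with ⟨x, hP⟩ | ⟨⟨x, hx⟩, hP⟩ <;>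
    obtain ⟨a, ha⟩ := (mk_eq_mk_iff' K _ _ _ _).1 hP
  exacts [linearSetParam_one_ne_smul_rotate_one hα hβ h2 x x' a ha,
    linearSetParam_zero_ne_smul_rotate_one hα hx x' a ha,
    linearSetParam_one_ne_smul_rotate_zero hβ h1 x x' a ha,
    linearSetParam_zero_ne_smul_rotate_zero hx x' a ha]

lemma ne_zero_of_mem_preimage_one (t : f ⁻¹' {1}) : (t : K) ≠ 0 :=
  ne_of_apply_ne f (by simp [show f t = 1 from t.2])

lemma range_mk_linearSetParam_zero (hker : LinearMap.ker f ≠ ⊥) :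
    Set.range (fun x : {x : K // x ≠ 0} => mk K (linearSetParam f α β (x, 0))
        (linearSetParam_ne_zero_of_ne_zero x.2 0)) =
      Set.range (fun t : f ⁻¹' {1} => mk K (linearSetParam f α β (t, 0))
        (linearSetParam_ne_zero_of_ne_zero (ne_zero_of_mem_preimage_one t) 0)) ∪
      {mk K ![1, 0, 0] (by simp)} := by
  have mk_of_mem_ker {x : K} (hx : x ≠ 0) (hfx : f x = 0) :
      mk K (linearSetParam f α β (x, 0)) (linearSetParam_ne_zero_of_ne_zero hx 0) =
        mk K ![1, 0, 0] (by simp) :=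
    (mk_eq_mk_iff' K _ _ _ _).2 ⟨x, by ext i; fin_cases i <;> simp [hfx]⟩
  ext P
  constructor
  · rintro ⟨⟨x, hx⟩, rfl⟩
    by_cases hfx : f x = 0
    · exact .inr (mk_of_mem_ker hx hfx)
    · exact .inl ⟨⟨(f x)⁻¹ • x, by simp [hfx]⟩,
        mk_linearSetParam_eq_of_eq_smul (c := (f x)⁻¹) (by simp) _ _⟩
  · rintro (⟨t, rfl⟩ | rfl)
    · exact ⟨⟨t, ne_zero_of_mem_preimage_one t⟩, rfl⟩
    · obtain ⟨x, hfx, hx⟩ := Submodule.exists_mem_ne_zero_of_ne_bot hker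
      exact ⟨⟨x, hx⟩, mk_of_mem_ker hx hfx⟩

lemma ncard_linearSet [Finite K] (hβ : β ≠ 0) (hker : LinearMap.ker f ≠ ⊥) :
    (linearSet f α β).ncard = Nat.card K + Nat.card (f ⁻¹' {1}) + 1 := by
  have hf1 (t : f ⁻¹' {1}) : f t = 1 := t.2
  rw [linearSet_eq_union hβ, Set.ncard_union_eq, range_mk_linearSetParam_zero hker,
    Set.ncard_union_eq, Set.ncard_singleton, Set.ncard_range_of_injective,
    Set.ncard_range_of_injective, add_assoc]
  · intro t t' h
    have := eq_of_mk_eq_of_apply_eq h (i := 1) (by simp [hf1]) (by simp [hf1])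
    exact Subtype.ext (by simpa using congrFun this 0)
  · intro x x' h
    have := eq_of_mk_eq_of_apply_eq h (i := 2) (by simp) (by simpa using hβ)
    simpa using congrFun this 0
  · rw [Set.disjoint_singleton_right]
    rintro ⟨t, ht⟩
    simpa [hf1] using (apply_eq_zero_iff_of_mk_eq ht 1).2
  · rw [Set.disjoint_left]
    rintro _ ⟨x, rfl⟩ ⟨x', h⟩
    simpa [hβ] using (apply_eq_zero_iff_of_mk_eq h 2).1

end LinearSet

theorem stmt_14_general {F K : Type*} [Field F] [Field K] [Algebra F K]
    [Fintype F] [Fintype K]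
    (q h : ℕ) (hcard : Fintype.card F = q)
    (hh : 2 ≤ h) (hrank : Module.finrank F K = h)
    (f : K →ₗ[F] F) (hf : f ≠ 0)
    (α β : K) (hα : α ∉ Set.range (algebraMap F K)) (hβ : β ≠ 0)
    (L : Set (Projectivization K (Fin 3 → K)))
    (hL : L = {P | ∃ (x : K) (y : F), (x ≠ 0 ∨ y ≠ 0) ∧
      ∃ hv : (![x, algebraMap F K (f x) + algebraMap F K y * α,
          algebraMap F K y * β] : Fin 3 → K) ≠ 0,
        P = Projectivization.mk K
          (![x, algebraMap F K (f x) + algebraMap F K y * α, algebraMap F K y * β]) hv})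
    (φ : Projectivization K (Fin 3 → K) → Projectivization K (Fin 3 → K))
    (hφ : φ = Projectivization.map
      (LinearEquiv.funCongrLeft K K (finRotate 3).symm).toLinearMap
      (LinearEquiv.funCongrLeft K K (finRotate 3).symm).injective)
    (h1 : f (α / β) ≠ 1)
    (h2 : ∀ k : F, k ≠ f (α ^ 2 / β)
      + (f (β ^ 2 / (α + algebraMap F K k)) + k) * f (α / β)
      + k * f (β ^ 2 / (α + algebraMap F K k)) * f (1 / β)) :
    L ∩ φ '' L = ∅ ∧
    Disjoint L (φ '' L) ∧ Disjoint L (φ '' (φ '' L)) ∧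
    Disjoint (φ '' L) (φ '' (φ '' L)) ∧
    (∀ a : Fin 3 → K, a ≠ 0 →
      3 ≤ (projLine a ∩ (L ∪ φ '' L ∪ φ '' (φ '' L))).ncard) ∧
    (L ∪ φ '' L ∪ φ '' (φ '' L)).ncard = 3 * (q ^ h + q ^ (h - 1) + 1) := by
  obtain rfl : L = linearSet f α β := hL
  obtain rfl : φ = permCoords (finRotate 3).symm := hφ
  have hdisj := disjoint_linearSet_image_permCoords hα hβ h1 h2
  obtain ⟨h13, h23⟩ :=
    disjoint_images_of_order_three permCoords_finRotate_symm_apply_apply_apply hdisj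
  have hmeet := linearSet_meetsEveryLine (f := f) (α := α) hβ
  have hker : LinearMap.ker f ≠ ⊥ :=
    LinearMap.ker_ne_bot_of_finrank_lt (by rw [finrank_self, hrank]; omega)
  have hcardL : (linearSet f α β).ncard = q ^ h + q ^ (h - 1) + 1 := by
    rw [ncard_linearSet hβ hker,
      Module.Dual.natCard_preimage_singleton hf, Module.natCard_eq_pow_finrank (K := F),
      Nat.card_eq_fintype_card, hcard, hrank]
  refine ⟨Set.disjoint_iff_inter_eq_empty.1 hdisj, hdisj, h13, h23, fun a ha =>
    three_le_ncard_projLine_inter_union hmeet (hmeet.image_permCoords _)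
      ((hmeet.image_permCoords _).image_permCoords _) hdisj h13 h23 ha, ?_⟩
  have hinj := permCoords_injective (K := K) (finRotate 3).symm
  rw [Set.ncard_union_eq (Set.disjoint_union_left.2 ⟨h13, h23⟩), Set.ncard_union_eq hdisj]
  simp only [Set.ncard_image_of_injective _ hinj, hcardL]
  ring

/-- With `φ : (x:y:z) ↦ (z:x:y)` and conditions (1)–(2) on `f, α, β`,
the set `L = {(x : f(x)+yα : yβ)}` is disjoint from `φ(L)`; hence `L, φ(L), φ²(L)` are
pairwise disjoint and their union is a 3-fold blocking set of size
`3(q^h + q^(h-1) + 1)`. -/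
theorem stmt_14 {F K : Type*} [Field F] [Field K] [Algebra F K]
    [Fintype F] [Fintype K]
    (q h : ℕ) (hq : IsPrimePow q) (hcard : Fintype.card F = q)
    (hh : 2 ≤ h) (hrank : Module.finrank F K = h)
    (f : K →ₗ[F] F) (hf : f ≠ 0)
    (α β : K) (hα : α ∉ Set.range (algebraMap F K)) (hβ : β ≠ 0)
    (L : Set (Projectivization K (Fin 3 → K)))
    (hL : L = {P | ∃ (x : K) (y : F), (x ≠ 0 ∨ y ≠ 0) ∧
      ∃ hv : (![x, algebraMap F K (f x) + algebraMap F K y * α,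
          algebraMap F K y * β] : Fin 3 → K) ≠ 0,
        P = Projectivization.mk K
          (![x, algebraMap F K (f x) + algebraMap F K y * α, algebraMap F K y * β]) hv})
    (φ : Projectivization K (Fin 3 → K) → Projectivization K (Fin 3 → K))
    (hφ : φ = Projectivization.map
      (LinearEquiv.funCongrLeft K K (finRotate 3).symm).toLinearMap
      (LinearEquiv.funCongrLeft K K (finRotate 3).symm).injective)
    (h1 : f (α / β) ≠ 1)
    (h2 : ∀ k : F, k ≠ f (α ^ 2 / β)
      + (f (β ^ 2 / (α + algebraMap F K k)) + k) * f (α / β)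
      + k * f (β ^ 2 / (α + algebraMap F K k)) * f (1 / β)) :
    L ∩ φ '' L = ∅ ∧
    Disjoint L (φ '' L) ∧ Disjoint L (φ '' (φ '' L)) ∧
    Disjoint (φ '' L) (φ '' (φ '' L)) ∧
    (∀ a : Fin 3 → K, a ≠ 0 →
      3 ≤ (projLine a ∩ (L ∪ φ '' L ∪ φ '' (φ '' L))).ncard) ∧
    (L ∪ φ '' L ∪ φ '' (φ '' L)).ncard = 3 * (q ^ h + q ^ (h - 1) + 1) :=
  stmt_14_general q h hcard hh hrank f hf α β hα hβ L hL φ hφ h1 h2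
end

section
/- Let q be a prime power. The number of triples (λ₀, λ₁, λ₂) ∈ F_q³ such that p(x) = x³ − λ₂x² − λ₁x − λ₀ is irreducible over F_q and r(x) = x³ + λ₂x² − (λ₁ − 1)x + λ₀ is reducible over F_q is at least q(q−1)²/9 − 2(q−1)/3. -/
/-!
Fix `k ≠ 0`. The triples `(λ₀, λ₁, λ₂)` with `r(k) = 0` form a plane, parametrized by
`(λ₁, λ₂) ∈ F²`. On it, `p(a) = 0` reads `(a + k)(λ₁ + (a - k) λ₂) = a³ + k³ + k`:
a line for `a ≠ -k`, nothing for `a = -k`, and the lines of two distinct roots meet in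
exactly one point.
Hence, with `N` the number of roots of `p` in `F`, the plane has `∑ N = q(q - 1)` and
`∑ N(N - 1) = (q - 1)(q - 2)`. As `(N - 1)(N - 3) ≤ 3·[N = 0]` for `0 ≤ N ≤ 3`, at least
`(q² + 2)/3` points of the plane have `p` irreducible (and `r` reducible). Each triple lies on at
most three of the `q - 1` planes, since `r` has at most three roots, so there are at least
`(q - 1)(q² + 2)/9` such triples.
-/

open Polynomial Finset

section Lines

variable {F : Type*} [Field F] [Fintype F] [DecidableEq F]

theorem card_filter_add_mul_eq (m c : F) :
    #{v : F × F | v.1 + m * v.2 = c} = Fintype.card F := by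
  have : ({v : F × F | v.1 + m * v.2 = c} : Finset _) = univ.image fun y => (c - m * y, y) := by
    ext v
    simp only [mem_filter, mem_univ, true_and, mem_image, Prod.ext_iff]
    constructor
    · intro h
      exact ⟨v.2, by linear_combination -h, rfl⟩
    · rintro ⟨y, h1, h2⟩
      rw [← h1, ← h2]
      ring
  rw [this, card_image_of_injective _ fun y y' h => congrArg Prod.snd h, card_univ]

theorem card_filter_add_mul_eq_and_add_mul_eq {m m' : F} (hm : m ≠ m') (c c' : F) :
    #{v : F × F | v.1 + m * v.2 = c ∧ v.1 + m' * v.2 = c'} = 1 := by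
  have hm' : m - m' ≠ 0 := sub_ne_zero.mpr hm
  rw [card_eq_one]
  refine ⟨(c - m * ((c - c') / (m - m')), (c - c') / (m - m')), ?_⟩
  ext v
  simp only [mem_filter, mem_univ, true_and, mem_singleton, Prod.ext_iff]
  constructor
  · rintro ⟨h, h'⟩
    have h2 : v.2 = (c - c') / (m - m') := by
      rw [eq_div_iff hm']
      linear_combination h - h'
    exact ⟨by rw [← h2]; linear_combination h, h2⟩
  · rintro ⟨h1, h2⟩
    rw [h1, h2]
    constructor
    · ring
    · field_simp
      ring

end Lines

namespace Polynomial

theorem card_filter_isRoot_le_natDegree {R : Type*} [CommRing R] [IsDomain R] [Fintype R]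
    [DecidableEq R] {p : R[X]} (hp : p ≠ 0) : #{a | p.IsRoot a} ≤ p.natDegree :=
  card_le_degree_of_subset_roots fun _ ha => (mem_roots hp).mpr (mem_filter.mp ha).2

theorem irreducible_of_forall_not_isRoot {K : Type*} [Field K] {p : K[X]}
    (hp2 : 2 ≤ p.natDegree) (hp3 : p.natDegree ≤ 3) (h : ∀ a, ¬p.IsRoot a) :
    Irreducible p := by
  rw [irreducible_iff_roots_eq_zero_of_degree_le_three hp2 hp3]
  exact Multiset.eq_zero_of_forall_notMem fun a ha => h a (isRoot_of_mem_roots ha)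

theorem not_irreducible_of_isRoot {K : Type*} [Field K] {p : K[X]}
    (hp : 2 ≤ p.natDegree) {a : K} (ha : p.IsRoot a) : ¬Irreducible p := fun hi => by
  have := degree_eq_one_of_irreducible_of_root hi ha
  rw [degree_eq_natDegree hi.ne_zero, Nat.cast_eq_one] at this
  omega

end Polynomial

section Cubics

variable {F : Type*} [Field F]

noncomputable def cubicP (t : F × F × F) : F[X] :=
  X ^ 3 - C t.2.2 * X ^ 2 - C t.2.1 * X - C t.1

noncomputable def cubicR (t : F × F × F) : F[X] :=
  X ^ 3 + C t.2.2 * X ^ 2 - C (t.2.1 - 1) * X + C t.1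

theorem natDegree_cubicP (t : F × F × F) : (cubicP t).natDegree = 3 := by
  unfold cubicP; compute_degree!

theorem natDegree_cubicR (t : F × F × F) : (cubicR t).natDegree = 3 := by
  unfold cubicR; compute_degree!

def planeTriple (k : F) (v : F × F) : F × F × F :=
  ((v.1 - 1) * k - v.2 * k ^ 2 - k ^ 3, v.1, v.2)

theorem planeTriple_injective (k : F) : Function.Injective (planeTriple k) :=
  fun _ _ h => Prod.ext (congrArg (·.2.1) h) (congrArg (·.2.2) h)

theorem isRoot_cubicR_planeTriple (k : F) (v : F × F) :
    (cubicR (planeTriple k v)).IsRoot k := by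
  simp only [IsRoot, cubicR, planeTriple, eval_add, eval_sub, eval_mul, eval_pow, eval_X, eval_C]
  ring

theorem isRoot_cubicP_planeTriple_iff (k a : F) (v : F × F) :
    (cubicP (planeTriple k v)).IsRoot a ↔
      (a + k) * (v.1 + (a - k) * v.2) = a ^ 3 + k ^ 3 + k := by
  simp only [IsRoot, cubicP, planeTriple, eval_sub, eval_mul, eval_pow, eval_X, eval_C]
  constructor <;> intro h <;> linear_combination -h

end Cubics

section Plane

variable {F : Type*} [Field F] [Fintype F] [DecidableEq F] {k : F}

noncomputable def rootsP (t : F × F × F) : Finset F := {a | (cubicP t).IsRoot a}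

theorem card_rootsP_le (t : F × F × F) : #(rootsP t) ≤ 3 :=
  natDegree_cubicP t ▸ card_filter_isRoot_le_natDegree
    (ne_zero_of_natDegree_gt (n := 0) (by rw [natDegree_cubicP]; norm_num))

theorem neg_notMem_rootsP_planeTriple (hk : k ≠ 0) (v : F × F) :
    -k ∉ rootsP (planeTriple k v) := by
  simp only [rootsP, mem_filter, mem_univ, true_and, isRoot_cubicP_planeTriple_iff]
  intro h
  exact hk (by linear_combination -h)

theorem card_filter_mem_rootsP_planeTriple (hk : k ≠ 0) (a : F) :
    #{v | a ∈ rootsP (planeTriple k v)} = if a = -k then 0 else Fintype.card F := by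
  split_ifs with ha
  · subst ha
    exact card_eq_zero.mpr <|
      filter_eq_empty_iff.mpr fun v _ => neg_notMem_rootsP_planeTriple hk v
  · simp only [rootsP, mem_filter, mem_univ, true_and, isRoot_cubicP_planeTriple_iff]
    have hak : a + k ≠ 0 := fun h => ha (by linear_combination h)
    simp_rw [mul_comm (a + k), ← eq_div_iff hak]
    exact card_filter_add_mul_eq _ _

theorem card_filter_pair_mem_rootsP_planeTriple (hk : k ≠ 0) {a b : F} (hab : a ≠ b) :
    #{v | a ∈ rootsP (planeTriple k v) ∧ b ∈ rootsP (planeTriple k v)} =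
      if a ≠ -k ∧ b ≠ -k then 1 else 0 := by
  split_ifs with h
  · obtain ⟨ha, hb⟩ := h
    have hak : a + k ≠ 0 := fun h => ha (by linear_combination h)
    have hbk : b + k ≠ 0 := fun h => hb (by linear_combination h)
    simp only [rootsP, mem_filter, mem_univ, true_and, isRoot_cubicP_planeTriple_iff]
    simp_rw [mul_comm (a + k), mul_comm (b + k), ← eq_div_iff hak, ← eq_div_iff hbk]
    exact card_filter_add_mul_eq_and_add_mul_eq (by simpa using hab) _ _
  · rw [card_eq_zero, filter_eq_empty_iff]
    rintro v - ⟨ha, hb⟩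
    rw [not_and_or, not_not, not_not] at h
    rcases h with rfl | rfl
    exacts [neg_notMem_rootsP_planeTriple hk v ha, neg_notMem_rootsP_planeTriple hk v hb]

theorem sum_card_rootsP_planeTriple (hk : k ≠ 0) :
    ∑ v : F × F, #(rootsP (planeTriple k v)) = (Fintype.card F - 1) * Fintype.card F := by
  have h := sum_card_bipartiteAbove_eq_sum_card_bipartiteBelow (s := (univ : Finset (F × F)))
    (t := (univ : Finset F)) fun v a => a ∈ rootsP (planeTriple k v)
  simp only [bipartiteAbove, bipartiteBelow, filter_mem_eq_inter, univ_inter] at h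
  rw [h]
  simp only [card_filter_mem_rootsP_planeTriple hk, sum_ite, sum_const_zero, sum_const, zero_add,
    filter_ne', card_erase_of_mem (mem_univ _), card_univ, smul_eq_mul]

theorem sum_card_offDiag_rootsP_planeTriple (hk : k ≠ 0) :
    ∑ v : F × F, #(rootsP (planeTriple k v)).offDiag =
      (Fintype.card F - 1) * (Fintype.card F - 1) - (Fintype.card F - 1) := by
  have h := sum_card_bipartiteAbove_eq_sum_card_bipartiteBelow (s := (univ : Finset (F × F)))
    (t := (univ : Finset F).offDiag) fun v (ab : F × F) =>
      ab.1 ∈ rootsP (planeTriple k v) ∧ ab.2 ∈ rootsP (planeTriple k v)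
  have hoff (v : F × F) : {ab ∈ (univ : Finset F).offDiag | ab.1 ∈ rootsP (planeTriple k v) ∧
      ab.2 ∈ rootsP (planeTriple k v)} = (rootsP (planeTriple k v)).offDiag := by
    ext ab
    simp only [mem_filter, mem_offDiag, mem_univ, true_and]
    tauto
  simp only [bipartiteAbove, bipartiteBelow, hoff] at h
  rw [h, sum_congr rfl fun (ab : F × F) hab => card_filter_pair_mem_rootsP_planeTriple hk
    (mem_offDiag.mp hab).2.2, sum_boole, Nat.cast_id, ← card_univ,
    ← card_erase_of_mem (mem_univ (-k)), ← offDiag_card]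
  congr 1
  ext ab
  simp only [mem_filter, mem_offDiag, mem_univ, mem_erase, true_and, and_true]
  tauto

end Plane

theorem three_add_mul_self_sub_le {n : ℕ} (hn : n ≤ 3) :
    3 + (n * n - n) ≤ 3 * (if n = 0 then 1 else 0) + 3 * n := by
  interval_cases n <;> decide

section Count

variable {F : Type*} [Field F] [Fintype F] [DecidableEq F]

theorem sq_add_two_le_three_mul_card_rootless {k : F} (hk : k ≠ 0) :
    Fintype.card F ^ 2 + 2 ≤ 3 * #{v : F × F | rootsP (planeTriple k v) = ∅} := by
  have hpt := sum_le_sum fun v (_ : v ∈ (univ : Finset (F × F))) =>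
    three_add_mul_self_sub_le (card_rootsP_le (planeTriple k v))
  simp only [← offDiag_card, sum_add_distrib, ← mul_sum, sum_const, card_univ,
    Fintype.card_prod, smul_eq_mul, sum_boole, card_eq_zero, sum_card_rootsP_planeTriple hk,
    sum_card_offDiag_rootsP_planeTriple hk, Nat.cast_id] at hpt
  obtain ⟨Q, hQ⟩ : ∃ Q, Fintype.card F = Q + 1 := Nat.exists_eq_add_one.mpr Fintype.card_pos
  simp only [hQ, Nat.add_sub_cancel] at hpt ⊢
  zify [Nat.le_mul_self Q] at hpt ⊢
  nlinarith

theorem sum_card_rootless_le {G : Finset (F × F × F)}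
    (hG : ∀ t, Irreducible (cubicP t) → ¬Irreducible (cubicR t) → t ∈ G) :
    ∑ k ∈ univ.erase 0, #{v : F × F | rootsP (planeTriple k v) = ∅} ≤ 3 * #G := by
  calc ∑ k ∈ univ.erase 0, #{v : F × F | rootsP (planeTriple k v) = ∅}
      ≤ ∑ k ∈ univ.erase 0, #{t ∈ G | (cubicR t).IsRoot k} := by
        refine sum_le_sum fun k _ => card_le_card_of_injOn (planeTriple k) (fun v hv => ?_)
          (planeTriple_injective k).injOn
        have hroots : rootsP (planeTriple k v) = ∅ := (mem_filter.mp hv).2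
        refine mem_filter.mpr ⟨hG _ ?_ ?_, isRoot_cubicR_planeTriple k v⟩
        · refine irreducible_of_forall_not_isRoot (by rw [natDegree_cubicP]; norm_num)
            (natDegree_cubicP _).le fun a ha => ?_
          exact notMem_empty a (hroots ▸ mem_filter.mpr ⟨mem_univ a, ha⟩)
        · exact not_irreducible_of_isRoot (by rw [natDegree_cubicR]; norm_num)
            (isRoot_cubicR_planeTriple k v)
    _ = ∑ t ∈ G, #{k ∈ univ.erase 0 | (cubicR t).IsRoot k} :=
        sum_card_bipartiteAbove_eq_sum_card_bipartiteBelow _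
    _ ≤ ∑ _t ∈ G, 3 := by
        refine sum_le_sum fun t _ =>
          (card_le_card (filter_subset_filter _ (subset_univ _))).trans ?_
        exact natDegree_cubicR t ▸ card_filter_isRoot_le_natDegree
          (ne_zero_of_natDegree_gt (n := 0) (by rw [natDegree_cubicR]; norm_num))
    _ = 3 * #G := by rw [sum_const, smul_eq_mul, mul_comm]

theorem card_sub_one_mul_sq_add_two_le {G : Finset (F × F × F)}
    (hG : ∀ t, Irreducible (cubicP t) → ¬Irreducible (cubicR t) → t ∈ G) :
    (Fintype.card F - 1) * (Fintype.card F ^ 2 + 2) ≤ 9 * #G :=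
  calc (Fintype.card F - 1) * (Fintype.card F ^ 2 + 2)
      ≤ ∑ k ∈ univ.erase 0, 3 * #{v : F × F | rootsP (planeTriple k v) = ∅} := by
        simpa [card_erase_of_mem] using
          sum_le_sum fun k (hk : k ∈ univ.erase (0 : F)) =>
            sq_add_two_le_three_mul_card_rootless (mem_erase.mp hk).1
    _ ≤ 9 * #G := by
        rw [← mul_sum]
        linarith [sum_card_rootless_le hG]

end Count

theorem stmt_16_general {F : Type*} [Field F] [Fintype F]
    (q : ℕ) (hcard : Fintype.card F = q) :
    (q * ((q : ℚ) - 1) ^ 2) / 9 - 2 * ((q : ℚ) - 1) / 3 ≤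
      ({t : F × F × F |
        Irreducible (X ^ 3 - C t.2.2 * X ^ 2 - C t.2.1 * X - C t.1) ∧
        ¬ Irreducible (X ^ 3 + C t.2.2 * X ^ 2 - C (t.2.1 - 1) * X + C t.1)} :
          Set (F × F × F)).ncard := by
  classical
  change _ ≤ (({t | Irreducible (cubicP t) ∧ ¬Irreducible (cubicR t)} : Set _).ncard : ℚ)
  rw [← coe_filter_univ, Set.ncard_coe_finset]
  set G : Finset (F × F × F) := {t | Irreducible (cubicP t) ∧ ¬Irreducible (cubicR t)}
  have hcount : (q - 1) * (q ^ 2 + 2) ≤ 9 * #G :=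
    hcard ▸ card_sub_one_mul_sq_add_two_le fun t hp hr => mem_filter.mpr ⟨mem_univ t, hp, hr⟩
  have hq : 1 ≤ q := hcard ▸ Fintype.card_pos
  have hcountQ := (Nat.cast_le (α := ℚ)).mpr hcount
  push_cast [hq] at hcountQ
  have hqQ : (1 : ℚ) ≤ q := by exact_mod_cast hq
  nlinarith

/-- The number of triples `(λ₀, λ₁, λ₂) ∈ F_q³` with
`p(x) = x³ − λ₂x² − λ₁x − λ₀` irreducible and `r(x) = x³ + λ₂x² − (λ₁−1)x + λ₀`
reducible over `F_q` is at least `q(q−1)²/9 − 2(q−1)/3`. -/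
theorem stmt_16 {F : Type*} [Field F] [Fintype F]
    (q : ℕ) (hq : IsPrimePow q) (hcard : Fintype.card F = q) :
    (q * ((q : ℚ) - 1) ^ 2) / 9 - 2 * ((q : ℚ) - 1) / 3 ≤
      ({t : F × F × F |
        Irreducible (X ^ 3 - C t.2.2 * X ^ 2 - C t.2.1 * X - C t.1) ∧
        ¬ Irreducible (X ^ 3 + C t.2.2 * X ^ 2 - C (t.2.1 - 1) * X + C t.1)} :
          Set (F × F × F)).ncard :=
  stmt_16_general q hcard
end
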